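/- arXiv:1908.06570 — 8 statements merged into one kernel-verified Lean document; each statement's English description precedes it below -/
import Mathlib

section
/- There exists a (K,F,Q,S) placement delivery array if and only if there exist finite sets X, Y, Z with |X| = F, |Y| = S, |Z| = K and binary matrices C_{X,Y} : X × Y → {0,1}, C_{X,Z} : X × Z → {0,1}, C_{Y,Z} : Y × Z → {0,1} satisfying conditions E1, E2, E3, E4 and E5. -/
open Finset

/-- A `(K, F, Q, S)` placement delivery array: an `F × K` array with entries in
`[S] ∪ {*}` (where `none` plays the role of `*`) satisfying conditions C1, C2, C3. -/
def IsPDA {K F S : ℕ} (Q : ℕ) (P : Fin F → Fin K → Option (Fin S)) : Prop :=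
  -- C1: the symbol `*` appears exactly `Q` times in each column
  (∀ k : Fin K, (univ.filter fun j : Fin F => P j k = none).card = Q) ∧
  -- C2: each integer `s ∈ [S]` occurs at least once in the array
  (∀ s : Fin S, ∃ j k, P j k = some s) ∧
  -- C3
  (∀ (j₁ j₂ : Fin F) (k₁ k₂ : Fin K) (s : Fin S), (j₁, k₁) ≠ (j₂, k₂) →
    P j₁ k₁ = some s → P j₂ k₂ = some s →
    j₁ ≠ j₂ ∧ k₁ ≠ k₂ ∧ P j₁ k₂ = none ∧ P j₂ k₁ = none)

/-- There exists a `(K, F, Q, S)` placement delivery array. -/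
def ExistsPDA (K F Q S : ℕ) : Prop :=
  ∃ P : Fin F → Fin K → Option (Fin S), IsPDA Q P

/-- Condition E1: for every `z ∈ Z`, `|{x ∈ X : C_{X,Z}(x,z) = 1}| = |X| - Q`. -/
def CondE1 {X Z : Type} [Fintype X] (CXZ : X → Z → Bool) (Q : ℕ) : Prop :=
  ∀ z : Z, (univ.filter fun x : X => CXZ x z = true).card = Fintype.card X - Q

/-- Condition E2: for every `y ∈ Y`, `{z ∈ Z : C_{Y,Z}(y,z) = 1} ≠ ∅`. -/
def CondE2 {Y Z : Type} (CYZ : Y → Z → Bool) : Prop :=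
  ∀ y : Y, ∃ z : Z, CYZ y z = true

/-- Condition E3: for every `(x,y)` with `C_{X,Y}(x,y) = 1` there is exactly one `z`
with `C_{X,Z}(x,z) = C_{Y,Z}(y,z) = 1`. -/
def CondE3 {X Y Z : Type} (CXY : X → Y → Bool) (CXZ : X → Z → Bool)
    (CYZ : Y → Z → Bool) : Prop :=
  ∀ x y, CXY x y = true → ∃! z, CXZ x z = true ∧ CYZ y z = true

/-- Condition E4: for every `(x,z)` with `C_{X,Z}(x,z) = 1` there is exactly one `y`
with `C_{X,Y}(x,y) = C_{Y,Z}(y,z) = 1`. -/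
def CondE4 {X Y Z : Type} (CXY : X → Y → Bool) (CXZ : X → Z → Bool)
    (CYZ : Y → Z → Bool) : Prop :=
  ∀ x z, CXZ x z = true → ∃! y, CXY x y = true ∧ CYZ y z = true

/-- Condition E5: for every `(y,z)` with `C_{Y,Z}(y,z) = 1` there is exactly one `x`
with `C_{X,Y}(x,y) = C_{X,Z}(x,z) = 1`. -/
def CondE5 {X Y Z : Type} (CXY : X → Y → Bool) (CXZ : X → Z → Bool)
    (CYZ : Y → Z → Bool) : Prop :=
  ∀ y z, CYZ y z = true → ∃! x, CXY x y = true ∧ CXZ x z = true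

/-- Condition E6: for every `z ∈ Z` and `(x, y) ∈ U_z^{(1)} × U_z^{(2)}`,
`|N_z(x)| = |N_z(y)| ≥ 1`, where `U_z^{(1)} = {x : C_{X,Z}(x,z) = 1}`,
`U_z^{(2)} = {y : C_{Y,Z}(y,z) = 1}`, `N_z(x) = {y' ∈ U_z^{(2)} : C_{X,Y}(x,y') = 1}`
and `N_z(y) = {x' ∈ U_z^{(1)} : C_{X,Y}(x',y) = 1}`. -/
def CondE6 {X Y Z : Type} [Fintype X] [Fintype Y] (CXY : X → Y → Bool)
    (CXZ : X → Z → Bool) (CYZ : Y → Z → Bool) : Prop :=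
  ∀ z x y, CXZ x z = true → CYZ y z = true →
    (univ.filter fun y' : Y => CYZ y' z = true ∧ CXY x y' = true).card =
      (univ.filter fun x' : X => CXZ x' z = true ∧ CXY x' y = true).card ∧
    1 ≤ (univ.filter fun y' : Y => CYZ y' z = true ∧ CXY x y' = true).card

/-- **Theorem 1.** There exists a `(K,F,Q,S)` placement delivery array if and only if
there exist finite sets `X, Y, Z` with `|X| = F`, `|Y| = S`, `|Z| = K` and binary
matrices `C_{X,Y}`, `C_{X,Z}`, `C_{Y,Z}` satisfying conditions E1–E5. -/
theorem exists_pda_iff_exists_matrices (K F Q S : ℕ) (hK : 0 < K) (hF : 0 < F)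
    (hQ : 0 < Q) (hS : 0 < S) (hQF : Q < F) :
    ExistsPDA K F Q S ↔
      ∃ (X Y Z : Type) (fX : Fintype X) (fY : Fintype Y) (fZ : Fintype Z),
        @Fintype.card X fX = F ∧ @Fintype.card Y fY = S ∧ @Fintype.card Z fZ = K ∧
        ∃ (CXY : X → Y → Bool) (CXZ : X → Z → Bool) (CYZ : Y → Z → Bool),
          @CondE1 X Z fX CXZ Q ∧ CondE2 CYZ ∧ CondE3 CXY CXZ CYZ ∧
          CondE4 CXY CXZ CYZ ∧ CondE5 CXY CXZ CYZ := by
  classical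
  constructor
  · rintro ⟨P, hC1, hC2, hC3⟩
    refine ⟨Fin F, Fin S, Fin K, inferInstance, inferInstance, inferInstance,
      Fintype.card_fin _, Fintype.card_fin _, Fintype.card_fin _,
      fun j s => decide (∃ k, P j k = some s),
      fun j k => (P j k).isSome,
      fun s k => decide (∃ j, P j k = some s), ?_, ?_, ?_, ?_, ?_⟩
    · -- E1
      intro z
      have h := hC1 z
      have hsplit := Finset.card_filter_add_card_filter_not
        (s := (univ : Finset (Fin F))) (p := fun j : Fin F => P j z = none)
      have heq : (univ.filter fun j : Fin F => (P j z).isSome = true)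
          = univ.filter fun j : Fin F => ¬ (P j z = none) := by
        ext j; simp [Option.isSome_iff_ne_none]
      rw [heq]
      simp only [Fintype.card_fin, card_univ] at hsplit ⊢
      omega
    · -- E2
      intro y
      obtain ⟨j, k, hjk⟩ := hC2 y
      exact ⟨k, by simp; exact ⟨j, hjk⟩⟩
    · -- E3
      intro x y hxy
      simp only [decide_eq_true_eq] at hxy
      obtain ⟨k, hk⟩ := hxy
      refine ⟨k, ⟨show (P x k).isSome = true by rw [hk]; rfl, by simp; exact ⟨x, hk⟩⟩, ?_⟩
      rintro z' ⟨h1, h2⟩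
      simp only [decide_eq_true_eq] at h2
      obtain ⟨j, hj⟩ := h2
      by_contra hne
      have hp : ((j, z') : Fin F × Fin K) ≠ (x, k) := by
        simp only [Ne, Prod.mk.injEq, not_and]; exact fun _ => hne
      obtain ⟨-, -, -, h4⟩ := hC3 j x z' k y hp hj hk
      have h1' : (P x z').isSome = true := h1
      rw [h4] at h1'; exact Bool.false_ne_true h1'
    · -- E4
      intro x z hxz
      obtain ⟨s, hs⟩ := Option.isSome_iff_exists.mp hxz
      refine ⟨s, ⟨by simp; exact ⟨z, hs⟩, by simp; exact ⟨x, hs⟩⟩, ?_⟩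
      rintro y' ⟨h1, h2⟩
      simp only [decide_eq_true_eq] at h1 h2
      obtain ⟨k, hk⟩ := h1
      obtain ⟨j, hj⟩ := h2
      by_cases hp : ((x, k) : Fin F × Fin K) = (j, z)
      · rw [Prod.mk.injEq] at hp
        obtain ⟨rfl, rfl⟩ := hp
        rw [hs] at hk; exact (Option.some_injective _ hk.symm)
      · obtain ⟨-, -, h4, -⟩ := hC3 x j k z y' hp hk hj
        rw [h4] at hs; exact absurd hs (by simp)
    · -- E5
      intro y z hyz
      simp only [decide_eq_true_eq] at hyz
      obtain ⟨j, hj⟩ := hyz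
      refine ⟨j, ⟨by simp; exact ⟨z, hj⟩, show (P j z).isSome = true by rw [hj]; rfl⟩, ?_⟩
      rintro x' ⟨h1, h2⟩
      simp only [decide_eq_true_eq] at h1
      obtain ⟨k, hk⟩ := h1
      by_cases hp : ((x', k) : Fin F × Fin K) = (j, z)
      · rw [Prod.mk.injEq] at hp; exact hp.1
      · obtain ⟨-, -, h4, -⟩ := hC3 x' j k z y hp hk hj
        have h2' : (P x' z).isSome = true := h2
        rw [h4] at h2'; exact absurd h2' (by simp)
  · rintro ⟨X, Y, Z, fX, fY, fZ, hX, hY, hZ, CXY, CXZ, CYZ, e1, e2, e3, e4, e5⟩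
    obtain eX : X ≃ Fin F := Fintype.equivFinOfCardEq hX
    obtain eY : Y ≃ Fin S := Fintype.equivFinOfCardEq hY
    obtain eZ : Z ≃ Fin K := Fintype.equivFinOfCardEq hZ
    set P : Fin F → Fin K → Option (Fin S) := fun j k =>
      if h : CXZ (eX.symm j) (eZ.symm k) = true then
        some (eY (Classical.choose (e4 (eX.symm j) (eZ.symm k) h))) else none with hP
    have hPnone : ∀ j k, P j k = none ↔ CXZ (eX.symm j) (eZ.symm k) = false := by
      intro j k
      simp only [hP]
      by_cases h : CXZ (eX.symm j) (eZ.symm k) = true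
      · rw [dif_pos h]
        simp [h]
      · rw [dif_neg h]
        simp [Bool.eq_false_iff.mpr h]
    have hPsome : ∀ (j : Fin F) (k : Fin K) (y : Y), P j k = some (eY y) ↔
        (CXY (eX.symm j) y = true ∧ CXZ (eX.symm j) (eZ.symm k) = true ∧
          CYZ y (eZ.symm k) = true) := by
      intro j k y
      simp only [hP]
      by_cases h : CXZ (eX.symm j) (eZ.symm k) = true
      · rw [dif_pos h]
        have hspec := Classical.choose_spec (e4 (eX.symm j) (eZ.symm k) h)
        constructor
        · intro heq
          have hy : Classical.choose (e4 (eX.symm j) (eZ.symm k) h) = y :=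
            eY.injective (Option.some_injective _ heq)
          rw [← hy]
          exact ⟨hspec.1.1, h, hspec.1.2⟩
        · rintro ⟨ha, -, hb⟩
          rw [hspec.2 y ⟨ha, hb⟩]
      · rw [dif_neg h]
        constructor
        · intro hc; exact absurd hc (by simp)
        · rintro ⟨-, hb, -⟩; exact absurd hb h
    refine ⟨P, ?_, ?_, ?_⟩
    · -- C1
      intro k
      have h1 := e1 (eZ.symm k)
      have heq : (univ.filter fun j : Fin F => P j k = none)
          = univ.filter fun j : Fin F => CXZ (eX.symm j) (eZ.symm k) = false := by
        ext j; simp [hPnone]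
      rw [heq]
      have hcard : (univ.filter fun j : Fin F => CXZ (eX.symm j) (eZ.symm k) = false).card
          = (univ.filter fun x : X => CXZ x (eZ.symm k) = false).card := by
        apply Finset.card_equiv eX.symm
        intro j; simp
      have hsplit := Finset.card_filter_add_card_filter_not
        (s := (univ : Finset X)) (p := fun x : X => CXZ x (eZ.symm k) = true)
      have heq2 : (univ.filter fun x : X => ¬ CXZ x (eZ.symm k) = true)
          = univ.filter fun x : X => CXZ x (eZ.symm k) = false := by
        ext x; simp
      rw [heq2, h1, card_univ, hX] at hsplit
      rw [hcard]
      omega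
    · -- C2
      intro s
      obtain ⟨z, hz⟩ := e2 (eY.symm s)
      obtain ⟨x, ⟨hxy, hxz⟩, -⟩ := e5 (eY.symm s) z hz
      refine ⟨eX x, eZ z, ?_⟩
      have := (hPsome (eX x) (eZ z) (eY.symm s)).mpr
        (by simpa using ⟨hxy, hxz, hz⟩)
      simpa using this
    · -- C3
      intro j₁ j₂ k₁ k₂ s hne h1 h2
      have h1' := (hPsome j₁ k₁ (eY.symm s)).mp (by simpa using h1)
      have h2' := (hPsome j₂ k₂ (eY.symm s)).mp (by simpa using h2)
      obtain ⟨A1, B1, D1⟩ := h1'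
      obtain ⟨A2, B2, D2⟩ := h2'
      have hjj : j₁ ≠ j₂ := by
        rintro rfl
        have hkk : k₁ ≠ k₂ := by
          rintro rfl; exact hne rfl
        have hz : eZ.symm k₁ = eZ.symm k₂ :=
          (e3 (eX.symm j₁) (eY.symm s) A1).unique ⟨B1, D1⟩ ⟨B2, D2⟩
        exact hkk (eZ.symm.injective hz)
      have hkk : k₁ ≠ k₂ := by
        rintro rfl
        have hx : eX.symm j₁ = eX.symm j₂ :=
          (e5 (eY.symm s) (eZ.symm k₁) D1).unique ⟨A1, B1⟩ ⟨A2, B2⟩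
        exact hjj (eX.symm.injective hx)
      refine ⟨hjj, hkk, ?_, ?_⟩
      · rw [hPnone]
        by_contra hcon
        have hcon' : CXZ (eX.symm j₁) (eZ.symm k₂) = true := by
          cases hb : CXZ (eX.symm j₁) (eZ.symm k₂) <;> simp_all
        have hx : eX.symm j₁ = eX.symm j₂ :=
          (e5 (eY.symm s) (eZ.symm k₂) D2).unique ⟨A1, hcon'⟩ ⟨A2, B2⟩
        exact hjj (eX.symm.injective hx)
      · rw [hPnone]
        by_contra hcon
        have hcon' : CXZ (eX.symm j₂) (eZ.symm k₁) = true := by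
          cases hb : CXZ (eX.symm j₂) (eZ.symm k₁) <;> simp_all
        have hx : eX.symm j₂ = eX.symm j₁ :=
          (e5 (eY.symm s) (eZ.symm k₁) D1).unique ⟨A2, hcon'⟩ ⟨A1, B1⟩
        exact hjj (eX.symm.injective hx).symm
end

section
/- Let q be a prime power and let k, m, t be positive integers with m + t ≤ k. Then there exists a (K,F,Q,S) placement delivery array with K = [k, t]_q, F = [k, m]_q, Q = [k, m]_q − [k−t, m]_q, and S = [k, m+t]_q. -/
open Finset

/-- The Gaussian (q-)binomial coefficient
`[ℓ, m]_q = ∏_{i=0}^{m-1} (q^{ℓ-i} - 1) / (q^{m-i} - 1)`. -/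
def gaussBinom (q ℓ m : ℕ) : ℕ :=
  (∏ i ∈ Finset.range m, (q ^ (ℓ - i) - 1)) / ∏ i ∈ Finset.range m, (q ^ (m - i) - 1)

section PDAAux
open Module Submodule

section Geo
variable {Fq M : Type*} [Field Fq] [Fintype Fq] [AddCommGroup M] [Module Fq M] [Finite M]

local notation "q" => Fintype.card Fq

/-! ### auxiliary facts -/

lemma pda_aux_fd : FiniteDimensional Fq M := by
  have := Fintype.ofFinite M
  exact Module.Finite.of_basis (Module.Free.chooseBasis Fq M)

lemma pda_exists_sub (d : ℕ) (hd : d ≤ finrank Fq M) :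
    ∃ W : Submodule Fq M, finrank Fq W = d := by
  obtain ⟨s, hcard, hli⟩ := exists_finset_linearIndependent_of_le_finrank (R := Fq) (M := M) hd
  exact ⟨span Fq (s : Set M), by rw [finrank_span_finset_eq_card hli, hcard]⟩

/-! ### Grassmannian cardinality -/

noncomputable def grassEquiv (m : ℕ) (hm0 : 0 < m) :
    (Σ W : {W : Submodule Fq M // finrank Fq W = m},
        { s : Fin m → ↥W.1 // LinearIndependent Fq s }) ≃
    { s : Fin m → M // LinearIndependent Fq s } := by
  haveI : Nonempty (Fin m) := ⟨⟨0, hm0⟩⟩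
  refine Equiv.ofBijective
    (fun p => ⟨fun i => (p.2.1 i : M), p.2.2.map' _ (ker_subtype _)⟩) ⟨?_, ?_⟩
  · rintro ⟨⟨W1, h1⟩, s1, hs1⟩ ⟨⟨W2, h2⟩, s2, hs2⟩ h
    have hv : (fun i => (s1 i : M)) = fun i => (s2 i : M) := congrArg Subtype.val h
    have hsp : ∀ (W : Submodule Fq M) (h : finrank Fq W = m) (s : Fin m → ↥W)
        (hs : LinearIndependent Fq s), span Fq (Set.range fun i => (s i : M)) = W := by
      intro W hW s hs
      have hsp : span Fq (Set.range s) = ⊤ :=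
        hs.span_eq_top_of_card_eq_finrank (by simp [hW])
      have : (Set.range fun i => (s i : M)) = W.subtype '' Set.range s := by
        rw [← Set.range_comp]; rfl
      rw [this, ← Submodule.map_span, hsp, Submodule.map_top, range_subtype]
    have hW : W1 = W2 := by
      rw [← hsp W1 h1 s1 hs1, ← hsp W2 h2 s2 hs2, hv]
    subst hW
    have : s1 = s2 := by
      funext i; exact Subtype.ext (congrFun hv i)
    subst this
    rfl
  · intro s
    refine ⟨⟨⟨span Fq (Set.range s.1), by rw [finrank_span_eq_card s.2, Fintype.card_fin]⟩,
      ⟨fun i => ⟨s.1 i, subset_span ⟨i, rfl⟩⟩, ?_⟩⟩, rfl⟩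
    exact LinearIndependent.of_comp (span Fq (Set.range s.1)).subtype s.2

lemma card_grass (m : ℕ) (hm0 : 0 < m) (hm : m ≤ finrank Fq M) :
    Nat.card {W : Submodule Fq M // finrank Fq W = m} = gaussBinom q (finrank Fq M) m := by
  classical
  have : Fintype M := Fintype.ofFinite M
  have hq2 : 2 ≤ q := Fintype.one_lt_card
  set n := finrank Fq M with hn
  have hfac : ∀ d : ℕ, m ≤ d → (∏ i : Fin m, (q ^ d - q ^ i.val))
      = (∏ i ∈ Finset.range m, q ^ i) * ∏ i ∈ Finset.range m, (q ^ (d - i) - 1) := by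
    intro d hd
    rw [Fin.prod_univ_eq_prod_range (fun i => q ^ d - q ^ i) m, ← Finset.prod_mul_distrib]
    refine Finset.prod_congr rfl fun i hi => ?_
    rw [Finset.mem_range] at hi
    have hid : i ≤ d := le_trans (le_of_lt hi) hd
    rw [Nat.mul_sub, mul_one, ← pow_add, Nat.add_sub_cancel' hid]
  have h2 : (∏ i : Fin m, (q ^ n - q ^ i.val))
      = Nat.card {W : Submodule Fq M // finrank Fq W = m} * ∏ i : Fin m, (q ^ m - q ^ i.val) := by
    rw [← card_linearIndependent hm, ← Nat.card_congr (grassEquiv m hm0)]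
    haveI : Fintype {W : Submodule Fq M // finrank Fq W = m} := Fintype.ofFinite _
    rw [Nat.card_eq_fintype_card, Fintype.card_sigma]
    calc ∑ W : {W : Submodule Fq M // finrank Fq W = m},
          Fintype.card { s : Fin m → ↥W.1 // LinearIndependent Fq s }
        = ∑ _W : {W : Submodule Fq M // finrank Fq W = m}, ∏ i : Fin m, (q ^ m - q ^ i.val) := by
          refine Finset.sum_congr rfl fun W _ => ?_
          rw [Fintype.card_eq_nat_card, card_linearIndependent (le_of_eq W.2.symm), W.2]
      _ = _ := by
          rw [Finset.sum_const, smul_eq_mul, Finset.card_univ, Fintype.card_eq_nat_card]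
  rw [hfac n hm, hfac m le_rfl] at h2
  have hPpos : 0 < ∏ i ∈ Finset.range m, q ^ i :=
    Finset.prod_pos fun i _ => pow_pos (lt_of_lt_of_le two_pos hq2) i
  have hDpos : 0 < ∏ i ∈ Finset.range m, (q ^ (m - i) - 1) := by
    refine Finset.prod_pos fun i hi => ?_
    rw [Finset.mem_range] at hi
    have : 1 < q ^ (m - i) := Nat.one_lt_pow (Nat.sub_ne_zero_of_lt hi) hq2
    omega
  have hND : (∏ i ∈ Finset.range m, (q ^ (n - i) - 1))
      = Nat.card {W : Submodule Fq M // finrank Fq W = m}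
        * ∏ i ∈ Finset.range m, (q ^ (m - i) - 1) := by
    apply Nat.eq_of_mul_eq_mul_left hPpos
    rw [h2]; ring
  exact (Nat.div_eq_of_eq_mul_left hDpos hND).symm

/-! ### complement counting -/

noncomputable def projEquivHom (p c : Submodule Fq M) (h : IsCompl p c) :
    { f : M →ₗ[Fq] p // ∀ x : p, f x = x } ≃ (↥c →ₗ[Fq] ↥p) where
  toFun f := f.1 ∘ₗ c.subtype
  invFun g := ⟨p.projectionOnto c h + g ∘ₗ (c.projectionOnto p h.symm), by
    intro x
    simp [projectionOnto_apply_left h x,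
      projectionOnto_apply_right h.symm x]⟩
  left_inv f := by
    ext x
    obtain ⟨f, hf⟩ := f
    have hx : ((p.projectionOnto c h x : M) + (c.projectionOnto p h.symm x : M)) = x :=
      projection_add_projection_eq_self h x
    simp only [LinearMap.add_apply, LinearMap.coe_comp, Function.comp_apply, coe_subtype]
    conv_rhs => rw [← hx]
    rw [map_add, hf]
  right_inv g := by
    ext x
    simp [projectionOnto_apply_right h x,
      projectionOnto_apply_left h.symm x]

lemma card_isCompl (p : Submodule Fq M) :
    Nat.card {W : Submodule Fq M // IsCompl p W}
      = q ^ (finrank Fq p * (finrank Fq M - finrank Fq p)) := by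
  classical
  obtain ⟨c, hc⟩ := Submodule.exists_isCompl p
  haveI : FiniteDimensional Fq M := pda_aux_fd
  have hc' : finrank Fq c = finrank Fq M - finrank Fq p := by
    have := Submodule.finrank_add_eq_of_isCompl hc
    omega
  haveI : Finite (↥c →ₗ[Fq] ↥p) :=
    Finite.of_injective _ (fun f g hfg => LinearMap.ext fun x => congrFun hfg x)
  haveI : Fintype (↥c →ₗ[Fq] ↥p) := Fintype.ofFinite _
  rw [Nat.card_congr ((p.isComplEquivProj).trans (projEquivHom p c hc))]
  rw [Nat.card_eq_fintype_card, card_eq_pow_finrank (K := Fq), Module.finrank_linearMap, hc']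
  ring

/-! ### matching -/

lemma exists_matching (m t : ℕ) (hE : finrank Fq M = m + t) :
    ∃ r : {V : Submodule Fq M // finrank Fq V = t} →
        {W : Submodule Fq M // finrank Fq W = m},
      Function.Injective r ∧ ∀ V, IsCompl V.1 (r V).1 := by
  classical
  haveI : Fintype M := Fintype.ofFinite M
  haveI : FiniteDimensional Fq M := pda_aux_fd
  haveI : Fintype (Submodule Fq M) := Fintype.ofFinite _
  set d := q ^ (t * m) with hd
  have hdpos : 0 < d := pow_pos Fintype.card_pos _
  have hdeg : ∀ p : Submodule Fq M, ∀ a b : ℕ, finrank Fq p = a → a + b = m + t →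
      (univ.filter fun W : Submodule Fq M => IsCompl p W).card = q ^ (a * b) := by
    intro p a b hp hab
    have := card_isCompl p
    rw [Nat.card_eq_fintype_card, Fintype.card_subtype] at this
    rw [this, hp, hE]
    congr 2
    omega
  set nbr : {V : Submodule Fq M // finrank Fq V = t} → Finset (Submodule Fq M) :=
    fun V => univ.filter fun W => IsCompl V.1 W with hnbr
  have hrank : ∀ (V : {V : Submodule Fq M // finrank Fq V = t}) (W : Submodule Fq M),
      W ∈ nbr V → finrank Fq W = m := by
    intro V W hW
    rw [hnbr, mem_filter] at hW
    have := Submodule.finrank_add_eq_of_isCompl hW.2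
    rw [V.2, hE] at this
    omega
  have hall : ∀ A : Finset {V : Submodule Fq M // finrank Fq V = t},
      A.card ≤ (A.biUnion nbr).card := by
    intro A
    have key := Finset.card_mul_le_card_mul
      (fun (V : {V : Submodule Fq M // finrank Fq V = t}) (W : Submodule Fq M) => IsCompl V.1 W)
      (s := A) (t := A.biUnion nbr) (m := d) (n := d) ?_ ?_
    · exact le_of_mul_le_mul_right (by exact key) hdpos
    · intro V hV
      have hsub : nbr V ⊆ A.biUnion nbr := Finset.subset_biUnion_of_mem nbr hV
      have : Finset.bipartiteAbove
          (fun (V : {V : Submodule Fq M // finrank Fq V = t}) (W : Submodule Fq M) =>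
            IsCompl V.1 W)
          (A.biUnion nbr) V = nbr V := by
        unfold Finset.bipartiteAbove
        rw [hnbr]
        ext W
        simp only [mem_filter, mem_univ, true_and]
        exact ⟨fun h => h.2, fun h => ⟨hsub (by simp [hnbr, h]), h⟩⟩
      rw [this, hnbr, hdeg V.1 t m V.2 (by omega)]
    · intro W hW
      obtain ⟨V0, hV0A, hV0⟩ := Finset.mem_biUnion.mp hW
      have hWm : finrank Fq W = m := hrank V0 W hV0
      have : (Finset.bipartiteBelow
          (fun (V : {V : Submodule Fq M // finrank Fq V = t}) (W : Submodule Fq M) =>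
            IsCompl V.1 W)
          A W).card ≤ (univ.filter fun V' : Submodule Fq M => IsCompl W V').card := by
        apply Finset.card_le_card_of_injOn (fun V => V.1)
        · intro V hV
          rw [Finset.mem_coe, Finset.mem_bipartiteBelow] at hV
          rw [Finset.mem_coe, Finset.mem_filter]
          exact ⟨mem_univ _, hV.2.symm⟩
        · intro a _ b _ hab
          exact Subtype.ext hab
      refine le_trans this ?_
      rw [hdeg W m t hWm (by omega)]
      exact le_of_eq (by rw [hd, Nat.mul_comm])
  obtain ⟨f, hfinj, hf⟩ := (Finset.all_card_le_biUnion_card_iff_existsInjective' nbr).mp hall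
  refine ⟨fun V => ⟨f V, hrank V _ (hf V)⟩, ?_, ?_⟩
  · intro a b hab
    exact hfinj (congrArg Subtype.val hab)
  · intro V
    have := hf V
    rw [hnbr, mem_filter] at this
    exact this.2

/-! ### quotient correspondence -/

lemma finrank_comap_mkQ (V : Submodule Fq M) (U' : Submodule Fq (M ⧸ V)) :
    finrank Fq (comap V.mkQ U') = finrank Fq U' + finrank Fq V := by
  classical
  haveI : FiniteDimensional Fq M := pda_aux_fd
  set U := comap V.mkQ U' with hU
  have hVU : V ≤ U := fun x hx => by
    rw [hU, Submodule.mem_comap, Submodule.mkQ_apply,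
      (Submodule.Quotient.mk_eq_zero V).mpr hx]
    exact U'.zero_mem
  set f : ↥U →ₗ[Fq] M ⧸ V := V.mkQ ∘ₗ U.subtype with hf
  have hrange : LinearMap.range f = U' := by
    rw [hf, LinearMap.range_comp, Submodule.range_subtype, Submodule.map_comap_eq,
      Submodule.range_mkQ, top_inf_eq]
  have hker : LinearMap.ker f = comap U.subtype V := by
    rw [hf, LinearMap.ker_comp, Submodule.ker_mkQ]
  have h1 := LinearMap.finrank_range_add_finrank_ker f
  rw [hrange, hker] at h1
  rw [← h1, LinearEquiv.finrank_eq (Submodule.comapSubtypeEquivOfLe hVU)]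

noncomputable def superEquiv (V : Submodule Fq M) (s : ℕ) (hs : finrank Fq V ≤ s) :
    {U : Submodule Fq M // V ≤ U ∧ finrank Fq U = s} ≃
      {U' : Submodule Fq (M ⧸ V) // finrank Fq U' = s - finrank Fq V} where
  toFun U := ⟨Submodule.map V.mkQ U.1, by
    have h1 := finrank_comap_mkQ V (Submodule.map V.mkQ U.1)
    rw [Submodule.comap_map_eq, Submodule.ker_mkQ, sup_eq_left.mpr U.2.1] at h1
    omega⟩
  invFun U' := ⟨comap V.mkQ U'.1, by
    constructor
    · intro x hx
      rw [Submodule.mem_comap, Submodule.mkQ_apply,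
        (Submodule.Quotient.mk_eq_zero V).mpr hx]
      exact U'.1.zero_mem
    · rw [finrank_comap_mkQ, U'.2]
      omega⟩
  left_inv U := by
    refine Subtype.ext ?_
    dsimp only
    rw [Submodule.comap_map_eq, Submodule.ker_mkQ, sup_eq_left.mpr U.2.1]
  right_inv U' := by
    refine Subtype.ext ?_
    dsimp only
    rw [Submodule.map_comap_eq, Submodule.range_mkQ, top_inf_eq]

end Geo

section Geo2
variable {Fq M : Type*} [Field Fq] [Fintype Fq] [AddCommGroup M] [Module Fq M] [Finite M]
variable (m t : ℕ)

local notation "Gr" d => {W : Submodule Fq M // finrank Fq W = d}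

noncomputable def matchR (U : Gr (m + t)) :
    {V' : Submodule Fq ↥U.1 // finrank Fq V' = t} →
      {W' : Submodule Fq ↥U.1 // finrank Fq W' = m} :=
  (exists_matching m t U.2).choose

lemma matchR_inj (U : Gr (m + t)) : Function.Injective (matchR m t U) :=
  (exists_matching m t U.2).choose_spec.1

lemma matchR_compl (U : Gr (m + t)) (V') : IsCompl V'.1 ((matchR m t U) V').1 :=
  (exists_matching m t U.2).choose_spec.2 V'

noncomputable def colSub (U : Gr (m + t)) (V : Gr t) (hV : V.1 ≤ U.1) :
    {V' : Submodule Fq ↥U.1 // finrank Fq V' = t} :=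
  ⟨comap U.1.subtype V.1,
    (LinearEquiv.finrank_eq (Submodule.comapSubtypeEquivOfLe hV)).trans V.2⟩

noncomputable def rowOf (U : Gr (m + t)) (V : Gr t) (hV : V.1 ≤ U.1) : Gr m :=
  ⟨map U.1.subtype ((matchR m t U) (colSub m t U V hV)).1, by
    rw [← LinearEquiv.finrank_eq
      (Submodule.equivMapOfInjective U.1.subtype (injective_subtype U.1) _)]
    exact ((matchR m t U) (colSub m t U V hV)).2⟩

lemma rowOf_le (U : Gr (m + t)) (V : Gr t) (hV : V.1 ≤ U.1) :
    (rowOf m t U V hV).1 ≤ U.1 := map_subtype_le _ _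

lemma map_colSub (U : Gr (m + t)) (V : Gr t) (hV : V.1 ≤ U.1) :
    map U.1.subtype (colSub m t U V hV).1 = V.1 := by
  rw [colSub, Submodule.map_comap_subtype, inf_eq_right.mpr hV]

lemma rowOf_sup (U : Gr (m + t)) (V : Gr t) (hV : V.1 ≤ U.1) :
    (rowOf m t U V hV).1 ⊔ V.1 = U.1 := by
  have hc := matchR_compl m t U (colSub m t U V hV)
  calc (rowOf m t U V hV).1 ⊔ V.1
      = map U.1.subtype (((matchR m t U) (colSub m t U V hV)).1 ⊔ (colSub m t U V hV).1) := by
        rw [Submodule.map_sup, map_colSub]; rfl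
    _ = map U.1.subtype ⊤ := by rw [hc.symm.codisjoint.eq_top]
    _ = U.1 := by rw [Submodule.map_top, range_subtype]

lemma rowOf_inj (U : Gr (m + t)) (V V' : Gr t) (hV : V.1 ≤ U.1) (hV' : V'.1 ≤ U.1)
    (h : rowOf m t U V hV = rowOf m t U V' hV') : V = V' := by
  have hmapinj : Function.Injective (map U.1.subtype) :=
    Submodule.map_injective_of_injective (injective_subtype U.1)
  have h1 : ((matchR m t U) (colSub m t U V hV)).1
      = ((matchR m t U) (colSub m t U V' hV')).1 := hmapinj (congrArg Subtype.val h)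
  have h2 : colSub m t U V hV = colSub m t U V' hV' := matchR_inj m t U (Subtype.ext h1)
  have h3 : (colSub m t U V hV).1 = (colSub m t U V' hV').1 := congrArg Subtype.val h2
  apply Subtype.ext
  rw [← map_colSub m t U V hV, ← map_colSub m t U V' hV', h3]

open Classical in
noncomputable def geoP : (Gr m) → (Gr t) → Option (Gr (m + t)) := fun W V =>
  if h : ∃ U : Gr (m + t), ∃ hV : V.1 ≤ U.1, rowOf m t U V hV = W then some h.choose else none

lemma geoP_unique (U U' : Gr (m + t)) (V : Gr t) (W : Gr m) (hV : V.1 ≤ U.1)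
    (hV' : V.1 ≤ U'.1) (h1 : rowOf m t U V hV = W) (h2 : rowOf m t U' V hV' = W) : U = U' := by
  apply Subtype.ext
  rw [← rowOf_sup m t U V hV, ← rowOf_sup m t U' V hV', h1, h2]

lemma geoP_eq_some_iff {W : Gr m} {V : Gr t} {U : Gr (m + t)} :
    geoP m t W V = some U ↔ ∃ hV : V.1 ≤ U.1, rowOf m t U V hV = W := by
  constructor
  · intro h
    rw [geoP] at h
    split_ifs at h with hex
    · obtain ⟨hVle, hrow⟩ := hex.choose_spec
      have := Option.some.inj h
      subst this
      exact ⟨hVle, hrow⟩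
  · rintro ⟨hVle, hrow⟩
    have hex : ∃ U : Gr (m + t), ∃ hV : V.1 ≤ U.1, rowOf m t U V hV = W := ⟨U, hVle, hrow⟩
    rw [geoP, dif_pos hex]
    obtain ⟨hVle', hrow'⟩ := hex.choose_spec
    exact congrArg some (geoP_unique m t _ U V W hVle' hVle hrow' hrow)

lemma geo_col_card (V : Gr t) :
    Nat.card {W : Gr m // geoP m t W V ≠ none}
      = Nat.card {U : Gr (m + t) // V.1 ≤ U.1} := by
  refine (Nat.card_congr (Equiv.ofBijective
    (fun U : {U : Gr (m + t) // V.1 ≤ U.1} =>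
      (⟨rowOf m t U.1 V U.2, by
        rw [(geoP_eq_some_iff m t).mpr ⟨U.2, rfl⟩]; exact Option.some_ne_none _⟩ :
        {W : Gr m // geoP m t W V ≠ none})) ⟨?_, ?_⟩)).symm
  · intro U1 U2 h
    have h' : rowOf m t U1.1 V U1.2 = rowOf m t U2.1 V U2.2 := by
      exact congrArg Subtype.val h
    exact Subtype.ext (geoP_unique m t U1.1 U2.1 V _ U1.2 U2.2 h' rfl)
  · rintro ⟨W, hW⟩
    obtain ⟨U, hU⟩ := Option.ne_none_iff_exists'.mp hW
    obtain ⟨hVle, hrow⟩ := (geoP_eq_some_iff m t).mp hU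
    exact ⟨⟨U, hVle⟩, Subtype.ext hrow⟩

lemma geo_onto (ht : 0 < t) (U : Gr (m + t)) : ∃ (W : Gr m) (V : Gr t),
    geoP m t W V = some U := by
  obtain ⟨V', hV'⟩ := pda_exists_sub (M := ↥U.1) t (by rw [U.2]; omega)
  have hVr : finrank Fq (map U.1.subtype V') = t := by
    rw [← LinearEquiv.finrank_eq
      (Submodule.equivMapOfInjective U.1.subtype (injective_subtype U.1) _), hV']
  refine ⟨rowOf m t U ⟨map U.1.subtype V', hVr⟩ (map_subtype_le _ _),
    ⟨map U.1.subtype V', hVr⟩, ?_⟩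
  exact (geoP_eq_some_iff m t).mpr ⟨map_subtype_le _ _, rfl⟩

lemma geo_c3 (W₁ W₂ : Gr m) (V₁ V₂ : Gr t) (U : Gr (m + t))
    (hne : (W₁, V₁) ≠ (W₂, V₂)) (h1 : geoP m t W₁ V₁ = some U)
    (h2 : geoP m t W₂ V₂ = some U) :
    W₁ ≠ W₂ ∧ V₁ ≠ V₂ ∧ geoP m t W₁ V₂ = none ∧ geoP m t W₂ V₁ = none := by
  classical
  haveI : FiniteDimensional Fq M := pda_aux_fd
  obtain ⟨hV1, hr1⟩ := (geoP_eq_some_iff m t).mp h1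
  obtain ⟨hV2, hr2⟩ := (geoP_eq_some_iff m t).mp h2
  have hVne : V₁ ≠ V₂ := by
    rintro rfl
    exact hne (by rw [← hr1, ← hr2])
  have hWne : W₁ ≠ W₂ := by
    rintro rfl
    exact hVne (rowOf_inj m t U V₁ V₂ hV1 hV2 (hr1.trans hr2.symm))
  have hcross : ∀ (Wa : Gr m) (Va Vb : Gr t) (hVa : Va.1 ≤ U.1) (hVb : Vb.1 ≤ U.1),
      Va ≠ Vb → rowOf m t U Va hVa = Wa → geoP m t Wa Vb = none := by
    intro Wa Va Vb hVa hVb hab hrow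
    by_contra h
    obtain ⟨U', hU'⟩ := Option.ne_none_iff_exists'.mp h
    obtain ⟨hVle', hrow'⟩ := (geoP_eq_some_iff m t).mp hU'
    have hUle : U'.1 ≤ U.1 := by
      rw [← rowOf_sup m t U' Vb hVle', hrow', ← hrow]
      exact sup_le (rowOf_le m t U Va hVa) hVb
    have hUU : U' = U := Subtype.ext (Submodule.eq_of_le_of_finrank_eq hUle
      (by rw [U'.2, U.2]))
    subst hUU
    exact hab (rowOf_inj m t U' Va Vb hVa hVle' (hrow.trans hrow'.symm))
  exact ⟨hWne, hVne, hcross W₁ V₁ V₂ hV1 hV2 hVne hr1,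
    hcross W₂ V₂ V₁ hV2 hV1 (Ne.symm hVne) hr2⟩

end Geo2


theorem exists_pda_geo (q k m t : ℕ) {Fq M : Type} [Field Fq] [Fintype Fq]
    [AddCommGroup M] [Module Fq M] [Finite M]
    (hcard : Fintype.card Fq = q) (hfr : finrank Fq M = k)
    (hm : 0 < m) (ht : 0 < t) (hmt : m + t ≤ k) :
    ExistsPDA (gaussBinom q k t) (gaussBinom q k m)
      (gaussBinom q k m - gaussBinom q (k - t) m) (gaussBinom q k (m + t)) := by
  classical
  haveI : FiniteDimensional Fq M := pda_aux_fd
  set K := gaussBinom q k t with hKdef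
  set F := gaussBinom q k m with hFdef
  set S := gaussBinom q k (m + t) with hSdef
  set C := gaussBinom q (k - t) m with hCdef
  have hK : Nat.card {W : Submodule Fq M // finrank Fq W = t} = K := by
    rw [card_grass t ht (by omega), hcard, hfr]
  have hF : Nat.card {W : Submodule Fq M // finrank Fq W = m} = F := by
    rw [card_grass m hm (by omega), hcard, hfr]
  have hS : Nat.card {W : Submodule Fq M // finrank Fq W = m + t} = S := by
    rw [card_grass (m + t) (by omega) (by omega), hcard, hfr]
  have hC : ∀ V : {W : Submodule Fq M // finrank Fq W = t},
      Nat.card {U : {W : Submodule Fq M // finrank Fq W = m + t} // V.1 ≤ U.1} = C := by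
    intro V
    haveI : Finite (M ⧸ V.1) := Finite.of_surjective V.1.mkQ (Submodule.mkQ_surjective V.1)
    have hqd : finrank Fq (M ⧸ V.1) = k - t := by
      have := Submodule.finrank_quotient_add_finrank V.1
      rw [hfr, V.2] at this
      omega
    have e1 : {U : {W : Submodule Fq M // finrank Fq W = m + t} // V.1 ≤ U.1} ≃
        {U : Submodule Fq M // V.1 ≤ U ∧ finrank Fq U = m + t} :=
      (Equiv.subtypeSubtypeEquivSubtypeInter _ _).trans
        (Equiv.subtypeEquivRight fun U => and_comm)
    rw [Nat.card_congr e1, Nat.card_congr (superEquiv V.1 (m + t) (by rw [V.2]; omega))]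
    have hmt' : (m + t) - finrank Fq V.1 = m := by rw [V.2]; omega
    rw [hmt']
    rw [card_grass m hm (by rw [hqd]; omega), hqd, hcard]
  haveI : Fintype {W : Submodule Fq M // finrank Fq W = t} := Fintype.ofFinite _
  haveI : Fintype {W : Submodule Fq M // finrank Fq W = m} := Fintype.ofFinite _
  haveI : Fintype {W : Submodule Fq M // finrank Fq W = m + t} := Fintype.ofFinite _
  let eK : {W : Submodule Fq M // finrank Fq W = t} ≃ Fin K :=
    Fintype.equivFinOfCardEq (by rw [← Nat.card_eq_fintype_card, hK])
  let eF : {W : Submodule Fq M // finrank Fq W = m} ≃ Fin F :=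
    Fintype.equivFinOfCardEq (by rw [← Nat.card_eq_fintype_card, hF])
  let eS : {W : Submodule Fq M // finrank Fq W = m + t} ≃ Fin S :=
    Fintype.equivFinOfCardEq (by rw [← Nat.card_eq_fintype_card, hS])
  refine ⟨fun j c => Option.map eS (geoP m t (eF.symm j) (eK.symm c)), ?_, ?_, ?_⟩
  · -- C1
    intro c
    set V := eK.symm c with hV
    have hiff : ∀ j : Fin F, (Option.map eS (geoP m t (eF.symm j) V) = none)
        ↔ geoP m t (eF.symm j) V = none := by
      intro j
      cases geoP m t (eF.symm j) V <;> simp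
    have h1 : (univ.filter fun j : Fin F =>
          Option.map eS (geoP m t (eF.symm j) (eK.symm c)) = none).card
        = Nat.card {W : {W : Submodule Fq M // finrank Fq W = m} // geoP m t W V = none} := by
      rw [← Fintype.card_subtype, ← Nat.card_eq_fintype_card]
      exact Nat.card_congr (Equiv.subtypeEquiv eF.symm (fun j => hiff j))
    rw [h1]
    have h2 : Nat.card {W : {W : Submodule Fq M // finrank Fq W = m} //
        geoP m t W V ≠ none} = C := by rw [geo_col_card, hC V]
    have h3 : Fintype.card {W : {W : Submodule Fq M // finrank Fq W = m} //
        ¬ (geoP m t W V = none)}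
        = Fintype.card {W : Submodule Fq M // finrank Fq W = m}
          - Fintype.card {W : {W : Submodule Fq M // finrank Fq W = m} //
              geoP m t W V = none} := Fintype.card_subtype_compl _
    have h4 : Fintype.card {W : {W : Submodule Fq M // finrank Fq W = m} //
        geoP m t W V = none} ≤ Fintype.card {W : Submodule Fq M // finrank Fq W = m} :=
      Fintype.card_subtype_le _
    simp only [Fintype.card_eq_nat_card] at h3 h4
    rw [hF] at h3 h4
    have h2' : Nat.card {W : {W : Submodule Fq M // finrank Fq W = m} //
        ¬ (geoP m t W V = none)} = C := h2
    omega
  · -- C2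
    intro s
    obtain ⟨W, V, hWV⟩ := geo_onto m t ht (eS.symm s)
    refine ⟨eF W, eK V, ?_⟩
    show Option.map (⇑eS) (geoP m t (eF.symm (eF W)) (eK.symm (eK V))) = some s
    rw [Equiv.symm_apply_apply, Equiv.symm_apply_apply, hWV]
    simp
  · -- C3
    intro j₁ j₂ c₁ c₂ s hne hp1 hp2
    have hmap : ∀ (W : {W : Submodule Fq M // finrank Fq W = m})
        (V : {W : Submodule Fq M // finrank Fq W = t}),
        Option.map eS (geoP m t W V) = some s → geoP m t W V = some (eS.symm s) := by
      intro W V h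
      cases hg : geoP m t W V with
      | none => rw [hg] at h; simp at h
      | some U =>
        rw [hg] at h
        simp only [Option.map_some, Option.some.injEq] at h
        rw [← h, Equiv.symm_apply_apply]
    have h1 := hmap _ _ hp1
    have h2 := hmap _ _ hp2
    have hne' : (eF.symm j₁, eK.symm c₁) ≠ (eF.symm j₂, eK.symm c₂) := by
      intro h
      apply hne
      have hW : eF.symm j₁ = eF.symm j₂ := congrArg Prod.fst h
      have hV : eK.symm c₁ = eK.symm c₂ := congrArg Prod.snd h
      rw [Prod.ext_iff]
      exact ⟨eF.symm.injective.eq_iff.mp (by rw [hW]) ▸ (by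
        have := congrArg eF hW
        rwa [Equiv.apply_symm_apply, Equiv.apply_symm_apply] at this), by
        have := congrArg eK hV
        rwa [Equiv.apply_symm_apply, Equiv.apply_symm_apply] at this⟩
    obtain ⟨hW, hV, hn1, hn2⟩ := geo_c3 m t _ _ _ _ _ hne' h1 h2
    refine ⟨?_, ?_, ?_, ?_⟩
    · intro h; exact hW (by rw [h])
    · intro h; exact hV (by rw [h])
    · show Option.map (⇑eS) (geoP m t (eF.symm j₁) (eK.symm c₂)) = none
      rw [hn1]; rfl
    · show Option.map (⇑eS) (geoP m t (eF.symm j₂) (eK.symm c₁)) = none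
      rw [hn2]; rfl

end PDAAux

/-- Projective-geometry construction, parameter set 1: for a prime power `q` and
positive integers `k, m, t` with `m + t ≤ k`, there is a PDA with `K = [k,t]_q`,
`F = [k,m]_q`, `Q = [k,m]_q - [k-t,m]_q`, `S = [k,m+t]_q`. -/
theorem exists_pda_projective_one (q k m t : ℕ) (hq : IsPrimePow q)
    (hk : 0 < k) (hm : 0 < m) (ht : 0 < t) (hmt : m + t ≤ k) :
    ExistsPDA (gaussBinom q k t) (gaussBinom q k m)
      (gaussBinom q k m - gaussBinom q (k - t) m) (gaussBinom q k (m + t)) := by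

  obtain ⟨p, n, hp, hn, rfl⟩ := hq
  haveI : Fact p.Prime := ⟨hp.nat_prime⟩
  haveI : Fintype (GaloisField p n) := Fintype.ofFinite _
  have hcard : Fintype.card (GaloisField p n) = p ^ n := by
    exact Fintype.card_eq_nat_card.trans (GaloisField.card p n hn.ne')
  exact exists_pda_geo (p ^ n) k m t (M := Fin k → GaloisField p n) hcard
    (Module.finrank_fin_fun _) hm ht hmt
end

section
/- Let q be a prime power and let k, m, t be positive integers with m + t ≤ k. Then there exists a (K,F,Q,S) placement delivery array with K = [k, m+t]_q, F = [k, t]_q, Q = [k, t]_q − [m+t, t]_q, and S = [k, m]_q. -/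
open Finset

section Aux

open Module Submodule

set_option linter.unusedSectionVars false

variable {K V : Type*} [Field K] [Fintype K] [AddCommGroup V] [Module K V] [Finite V]

instance : Finite (Submodule K V) :=
  Finite.of_injective (fun W : Submodule K V => (W : Set V)) SetLike.coe_injective

/-- Counting: (number of t-dim subspaces) * ∏(q^(t-i)-1) = ∏(q^(n-i)-1). -/
lemma grass_mul {t : ℕ} (ht : t ≤ finrank K V) :
    Nat.card {W : Submodule K V // finrank K W = t} *
      ∏ i ∈ Finset.range t, (Fintype.card K ^ (t - i) - 1) =
    ∏ i ∈ Finset.range t, (Fintype.card K ^ (finrank K V - i) - 1) := by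
  classical
  cases nonempty_fintype V
  set q := Fintype.card K with hq
  set n := finrank K V with hn
  have h1 : Nat.card {s : Fin t → V // LinearIndependent K s}
      = ∏ i : Fin t, (q ^ n - q ^ i.val) := card_linearIndependent ht
  set G := {W : Submodule K V // finrank K W = t} with hG
  let Φ : {s : Fin t → V // LinearIndependent K s} → G := fun s =>
    ⟨span K (Set.range s.1), by rw [finrank_span_eq_card s.2, Fintype.card_fin]⟩
  have hfib : ∀ W : G, Nat.card {s // Φ s = W} = ∏ i : Fin t, (q ^ t - q ^ i.val) := by
    intro W
    have hW : finrank K W.1 = t := W.2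
    let e : {s // Φ s = W} ≃ {s' : Fin t → W.1 // LinearIndependent K s'} :=
      { toFun := fun s =>
          ⟨fun i => ⟨s.1.1 i, by
              have hsp : span K (Set.range s.1.1) = W.1 := congrArg Subtype.val s.2
              exact hsp ▸ subset_span (Set.mem_range_self i)⟩,
            by exact LinearIndependent.of_comp W.1.subtype s.1.2⟩
        invFun := fun s' =>
          ⟨⟨fun i => ((s'.1 i : W.1) : V), by exact s'.2.map' W.1.subtype (ker_subtype W.1)⟩, by
            apply Subtype.ext
            show span K (Set.range fun i => ((s'.1 i : W.1) : V)) = W.1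
            have hr : (Set.range fun i => ((s'.1 i : W.1) : V))
                = W.1.subtype '' Set.range s'.1 := by
              ext x; simp [Set.mem_range]
            rw [hr, ← Submodule.map_span]
            have hsp : span K (Set.range s'.1) = (⊤ : Submodule K W.1) := by
              apply Submodule.eq_top_of_finrank_eq
              rw [finrank_span_eq_card s'.2, Fintype.card_fin, hW]
            rw [hsp, Submodule.map_subtype_top]⟩
        left_inv := fun s => by apply Subtype.ext; apply Subtype.ext; rfl
        right_inv := fun s' => by apply Subtype.ext; funext i; apply Subtype.ext; rfl }
    rw [Nat.card_congr e]
    have hle : t ≤ finrank K W.1 := le_of_eq hW.symm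
    rw [card_linearIndependent hle, hW]
  have hsum : Nat.card {s : Fin t → V // LinearIndependent K s}
      = Nat.card G * ∏ i : Fin t, (q ^ t - q ^ i.val) := by
    rw [Nat.card_congr (Equiv.sigmaFiberEquiv Φ).symm]
    letI : Fintype G := Fintype.ofFinite G
    letI : ∀ W : G, Fintype {s // Φ s = W} := fun W => Fintype.ofFinite _
    rw [Nat.card_eq_fintype_card, Fintype.card_sigma]
    rw [Finset.sum_congr rfl fun W _ => by
      rw [← Nat.card_eq_fintype_card, hfib W], Finset.sum_const, smul_eq_mul,
      Nat.card_eq_fintype_card, Finset.card_univ]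
  have key : Nat.card G * ∏ i : Fin t, (q ^ t - q ^ i.val)
      = ∏ i : Fin t, (q ^ n - q ^ i.val) := by rw [← hsum, h1]
  have hq2 : 2 ≤ q := Fintype.one_lt_card
  have factor : ∀ d : ℕ, t ≤ d →
      ∏ i ∈ Finset.range t, (q ^ d - q ^ i) =
      (∏ i ∈ Finset.range t, q ^ i) * ∏ i ∈ Finset.range t, (q ^ (d - i) - 1) := by
    intro d hd
    rw [← Finset.prod_mul_distrib]
    refine Finset.prod_congr rfl fun i hi => ?_
    have hid : i + (d - i) = d := by
      have := Finset.mem_range.mp hi; omega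
    calc q ^ d - q ^ i = q ^ i * q ^ (d - i) - q ^ i * 1 := by
          rw [← pow_add, hid, mul_one]
      _ = q ^ i * (q ^ (d - i) - 1) := by rw [← Nat.mul_sub]
  have hA : 0 < ∏ i ∈ Finset.range t, q ^ i :=
    Finset.prod_pos fun i _ => pow_pos (by omega) _
  have key2 : (∏ i ∈ Finset.range t, q ^ i) *
      (Nat.card G * ∏ i ∈ Finset.range t, (q ^ (t - i) - 1)) =
      (∏ i ∈ Finset.range t, q ^ i) * ∏ i ∈ Finset.range t, (q ^ (n - i) - 1) := by
    rw [← factor n ht, ← Fin.prod_univ_eq_prod_range (fun i => q ^ n - q ^ i) t, ← key]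
    rw [Fin.prod_univ_eq_prod_range (fun i => q ^ t - q ^ i) t, factor t le_rfl]
    ring
  exact Nat.eq_of_mul_eq_mul_left hA key2

lemma denom_pos {t : ℕ} : 0 < ∏ i ∈ Finset.range t, (Fintype.card K ^ (t - i) - 1) := by
  have hq2 : 2 ≤ Fintype.card K := Fintype.one_lt_card
  refine Finset.prod_pos fun i hi => ?_
  have hi' := Finset.mem_range.mp hi
  have h1 : 1 ≤ t - i := by omega
  have : 2 ≤ Fintype.card K ^ (t - i) :=
    le_trans hq2 (Nat.pow_le_pow_right (by omega) h1 |>.trans_eq' (by rw [pow_one]))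
  omega

lemma grass_card {t : ℕ} (ht : t ≤ finrank K V) :
    Nat.card {W : Submodule K V // finrank K W = t}
      = gaussBinom (Fintype.card K) (finrank K V) t := by
  rw [gaussBinom, ← grass_mul ht,
    Nat.mul_div_cancel _ (denom_pos (K := K))]

/-- Number of complements of a subspace. -/
lemma card_compl_eq (p : Submodule K V) :
    Nat.card {q' : Submodule K V // IsCompl p q'}
      = Fintype.card K ^ (finrank K (V ⧸ p) * finrank K p) := by
  classical
  rw [Nat.card_congr (p.isComplEquivProj)]
  obtain ⟨q0, hq0⟩ := p.exists_isCompl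
  set f0 := p.linearProjOfIsCompl q0 hq0 with hf0def
  have hf0 : ∀ x : p, f0 x = x := fun x => Submodule.linearProjOfIsCompl_apply_left hq0 x
  let e : ((V ⧸ p) →ₗ[K] p) ≃ {f : V →ₗ[K] p // ∀ x : p, f x = x} :=
    { toFun := fun g => ⟨f0 + g ∘ₗ p.mkQ, fun x => by
        simp only [LinearMap.add_apply, LinearMap.comp_apply, Submodule.mkQ_apply]
        rw [hf0 x, (Submodule.Quotient.mk_eq_zero _).2 x.2, map_zero, add_zero]⟩
      invFun := fun F => p.liftQ (F.1 - f0) (by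
        intro x hx
        simp only [LinearMap.mem_ker, LinearMap.sub_apply]
        rw [F.2 ⟨x, hx⟩, hf0 ⟨x, hx⟩, sub_self])
      left_inv := fun g => by
        apply LinearMap.ext
        intro z
        obtain ⟨x, rfl⟩ := Submodule.Quotient.mk_surjective p z
        simp
      right_inv := fun F => by
        apply Subtype.ext
        apply LinearMap.ext
        intro x
        simp }
  rw [Nat.card_congr e.symm]
  haveI : Finite (V ⧸ p) := Quotient.finite _
  haveI : Finite ((V ⧸ p) →ₗ[K] p) :=
    Finite.of_injective (fun f => (f : (V ⧸ p) → p)) DFunLike.coe_injective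
  letI : Fintype ((V ⧸ p) →ₗ[K] p) := Fintype.ofFinite _
  rw [Nat.card_eq_fintype_card, card_eq_pow_finrank (K := K), Module.finrank_linearMap]

lemma exists_superspace {r : ℕ} (U : Submodule K V) (h1 : finrank K U ≤ r)
    (h2 : r ≤ finrank K V) : ∃ W : Submodule K V, U ≤ W ∧ finrank K W = r := by
  induction r, h1 using Nat.le_induction with
  | base => exact ⟨U, le_rfl, rfl⟩
  | succ r hr IH =>
    obtain ⟨W, hUW, hW⟩ := IH (by omega)
    have hWne : W ≠ ⊤ := by
      intro h
      rw [h, finrank_top] at hW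
      omega
    obtain ⟨x, hx⟩ : ∃ x, x ∉ W := by
      by_contra h
      push_neg at h
      exact hWne (Submodule.eq_top_iff'.2 h)
    have hx0 : x ≠ 0 := fun h => hx (h ▸ W.zero_mem)
    have hinf : W ⊓ (K ∙ x) = ⊥ := by
      rw [Submodule.eq_bot_iff]
      rintro y ⟨hyW, hyx⟩
      obtain ⟨c, rfl⟩ := Submodule.mem_span_singleton.mp hyx
      rcases eq_or_ne c 0 with rfl | hc
      · simp
      · exact absurd (by simpa using W.smul_mem c⁻¹ hyW) (by
          rwa [inv_smul_smul₀ hc] )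
    refine ⟨W ⊔ (K ∙ x), le_trans hUW le_sup_left, ?_⟩
    have := Submodule.finrank_sup_add_finrank_inf_eq W (K ∙ x)
    rw [hinf, finrank_bot, finrank_span_singleton hx0, hW] at this
    omega

/-- One-sided matching via Hall's theorem. -/
lemma exists_compl_injection {m t : ℕ} (h : finrank K V = m + t) :
    ∃ c : {A : Submodule K V // finrank K A = t} → {B : Submodule K V // finrank K B = m},
      Function.Injective c ∧ ∀ A, IsCompl A.1 (c A).1 := by
  classical
  haveI : Finite (Submodule K V) :=
    Finite.of_injective (fun W : Submodule K V => (W : Set V)) SetLike.coe_injective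
  letI : Fintype {A : Submodule K V // finrank K A = t} := Fintype.ofFinite _
  letI : Fintype {B : Submodule K V // finrank K B = m} := Fintype.ofFinite _
  set SA := {A : Submodule K V // finrank K A = t}
  set SB := {B : Submodule K V // finrank K B = m}
  set d := Fintype.card K ^ (m * t) with hd
  have hcomplrk : ∀ A B : Submodule K V, IsCompl A B → finrank K A = t → finrank K B = m := by
    intro A B hAB hA
    have := Submodule.finrank_add_eq_of_isCompl hAB
    omega
  have hdegA : ∀ A : SA, (univ.filter fun B : SB => IsCompl A.1 B.1).card = d := by
    intro A
    rw [← Fintype.card_subtype]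
    have e : {B : SB // IsCompl A.1 B.1} ≃ {q' : Submodule K V // IsCompl A.1 q'} :=
      { toFun := fun x => ⟨x.1.1, x.2⟩
        invFun := fun y => ⟨⟨y.1, hcomplrk A.1 y.1 y.2 A.2⟩, y.2⟩
        left_inv := fun x => by ext; rfl
        right_inv := fun y => rfl }
    rw [← Nat.card_eq_fintype_card, Nat.card_congr e, card_compl_eq A.1]
    have hq : finrank K (V ⧸ A.1) = m := by
      have := Submodule.finrank_quotient_add_finrank A.1
      rw [A.2, h] at this
      omega
    rw [hq, A.2]
  have hdegB : ∀ B : SB, (univ.filter fun A : SA => IsCompl A.1 B.1).card = d := by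
    intro B
    rw [← Fintype.card_subtype]
    have e : {A : SA // IsCompl A.1 B.1} ≃ {q' : Submodule K V // IsCompl B.1 q'} :=
      { toFun := fun x => ⟨x.1.1, x.2.symm⟩
        invFun := fun y => ⟨⟨y.1, by
          have := Submodule.finrank_add_eq_of_isCompl y.2
          rw [B.2, h] at this
          omega⟩, y.2.symm⟩
        left_inv := fun x => by ext; rfl
        right_inv := fun y => rfl }
    rw [← Nat.card_eq_fintype_card, Nat.card_congr e, card_compl_eq B.1]
    have hq : finrank K (V ⧸ B.1) = t := by
      have := Submodule.finrank_quotient_add_finrank B.1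
      rw [B.2, h] at this
      omega
    rw [hq, B.2, hd, Nat.mul_comm]
  have hdpos : 0 < d := pow_pos Fintype.card_pos _
  set tset : SA → Finset SB := (fun A => univ.filter fun B : SB => IsCompl A.1 B.1) with htset
  have hall : ∀ s : Finset SA, s.card ≤ (s.biUnion tset).card := by
    intro s
    have h1 : ∑ A ∈ s, (tset A).card = s.card * d := by
      rw [Finset.sum_congr rfl fun A _ => hdegA A, Finset.sum_const, smul_eq_mul]
    have h2 : ∀ A ∈ s, (tset A).card
        = ∑ B ∈ s.biUnion tset, (if B ∈ tset A then 1 else 0) := by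
      intro A hA
      rw [← Finset.card_filter]
      congr 1
      rw [Finset.filter_mem_eq_inter]
      exact (Finset.inter_eq_right.2 (Finset.subset_biUnion_of_mem tset hA)).symm
    have h3 : s.card * d ≤ (s.biUnion tset).card * d := by
      rw [← h1, Finset.sum_congr rfl h2, Finset.sum_comm]
      have h4 : ∀ B ∈ s.biUnion tset,
          ∑ A ∈ s, (if B ∈ tset A then 1 else 0) ≤ d := by
        intro B _
        rw [← Finset.card_filter]
        refine le_trans (Finset.card_le_card ?_) (le_of_eq (hdegB B))
        intro A hA
        simp only [Finset.mem_filter, htset, Finset.mem_univ, true_and] at hA ⊢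
        exact hA.2
      calc ∑ B ∈ s.biUnion tset, ∑ A ∈ s, (if B ∈ tset A then 1 else 0)
          ≤ ∑ B ∈ s.biUnion tset, d := Finset.sum_le_sum h4
        _ = (s.biUnion tset).card * d := by rw [Finset.sum_const, smul_eq_mul]
    exact Nat.le_of_mul_le_mul_right h3 hdpos
  obtain ⟨f, hfinj, hf⟩ := (Finset.all_card_le_biUnion_card_iff_exists_injective tset).mp hall
  refine ⟨f, hfinj, fun A => ?_⟩
  have := hf A
  simp only [htset, Finset.mem_filter, Finset.mem_univ, true_and] at this
  exact this

/-- Two-sided matching: a complementing bijection. -/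
lemma exists_compl_matching {m t : ℕ} (h : finrank K V = m + t) :
    ∃ c : {A : Submodule K V // finrank K A = t} → {B : Submodule K V // finrank K B = m},
      Function.Bijective c ∧ ∀ A, IsCompl A.1 (c A).1 := by
  classical
  haveI : Finite (Submodule K V) :=
    Finite.of_injective (fun W : Submodule K V => (W : Set V)) SetLike.coe_injective
  letI : Fintype {A : Submodule K V // finrank K A = t} := Fintype.ofFinite _
  letI : Fintype {B : Submodule K V // finrank K B = m} := Fintype.ofFinite _
  obtain ⟨c, hcinj, hc⟩ := exists_compl_injection h
  obtain ⟨c', hc'inj, _⟩ := exists_compl_injection (m := t) (t := m) (h.trans (Nat.add_comm m t))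
  have hcard : Fintype.card {A : Submodule K V // finrank K A = t}
      = Fintype.card {B : Submodule K V // finrank K B = m} :=
    le_antisymm (Fintype.card_le_of_injective c hcinj)
      (Fintype.card_le_of_injective c' hc'inj)
  exact ⟨c, (Fintype.bijective_iff_injective_and_card c).2 ⟨hcinj, hcard⟩, hc⟩

end Aux

open Module Submodule

lemma existsPDA_of {α β σ : Type*} [Fintype α] [Fintype β] [Fintype σ] [DecidableEq σ]
    {F K S Q : ℕ} (P0 : α → β → Option σ)
    (hF : Fintype.card α = F) (hK : Fintype.card β = K) (hS : Fintype.card σ = S)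
    (c1 : ∀ b, (univ.filter fun a => P0 a b = none).card = Q)
    (c2 : ∀ s, ∃ a b, P0 a b = some s)
    (c3 : ∀ a1 a2 b1 b2 s, (a1, b1) ≠ (a2, b2) → P0 a1 b1 = some s → P0 a2 b2 = some s →
      a1 ≠ a2 ∧ b1 ≠ b2 ∧ P0 a1 b2 = none ∧ P0 a2 b1 = none) :
    ExistsPDA K F Q S := by
  classical
  let eα := Fintype.equivFinOfCardEq hF
  let eβ := Fintype.equivFinOfCardEq hK
  let eσ := Fintype.equivFinOfCardEq hS
  refine ⟨fun j k => (P0 (eα.symm j) (eβ.symm k)).map eσ, ?_, ?_, ?_⟩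
  · intro k
    rw [← c1 (eβ.symm k)]
    apply Finset.card_equiv eα.symm
    intro j
    simp [Option.map_eq_none_iff]
  · intro s
    obtain ⟨a, b, hab⟩ := c2 (eσ.symm s)
    exact ⟨eα a, eβ b, by simp [hab]⟩
  · intro j₁ j₂ k₁ k₂ s hne h1 h2
    rw [Option.map_eq_some_iff] at h1 h2
    obtain ⟨s1, hs1, rfl⟩ := h1
    obtain ⟨s2, hs2, hs2'⟩ := h2
    obtain rfl : s2 = s1 := eσ.injective hs2'
    have hne' : (eα.symm j₁, eβ.symm k₁) ≠ (eα.symm j₂, eβ.symm k₂) := by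
      intro hcontra
      apply hne
      have h1 := congrArg Prod.fst hcontra
      have h2 := congrArg Prod.snd hcontra
      simp only at h1 h2
      rw [Prod.ext_iff]
      exact ⟨by simpa using congrArg eα h1, by simpa using congrArg eβ h2⟩
    obtain ⟨ha, hb, hn1, hn2⟩ := c3 _ _ _ _ _ hne' hs1 hs2
    refine ⟨fun hcontra => ha (by rw [hcontra]), fun hcontra => hb (by rw [hcontra]),
      by simp [hn1], by simp [hn2]⟩


/-- Projective-geometry construction, parameter set 3: for a prime power `q` and
positive integers `k, m, t` with `m + t ≤ k`, there is a PDA with `K = [k,m+t]_q`,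
`F = [k,t]_q`, `Q = [k,t]_q - [m+t,t]_q`, `S = [k,m]_q`. -/
theorem exists_pda_projective_three (q k m t : ℕ) (hq : IsPrimePow q)
    (hk : 0 < k) (hm : 0 < m) (ht : 0 < t) (hmt : m + t ≤ k) :
    ExistsPDA (gaussBinom q k (m + t)) (gaussBinom q k t)
      (gaussBinom q k t - gaussBinom q (m + t) t) (gaussBinom q k m) := by
  classical
  obtain ⟨p, n, hp, hn, rfl⟩ := hq
  haveI : Fact p.Prime := ⟨Nat.prime_iff.mpr hp⟩
  letI K : Type := GaloisField p n
  letI : Fintype K := Fintype.ofFinite K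
  have hcardK : Fintype.card K = p ^ n := by
    have := GaloisField.card p n (by omega)
    rwa [Nat.card_eq_fintype_card] at this
  letI E := Fin k → K
  haveI : Finite E := by infer_instance
  have hfr : finrank K E = k := Module.finrank_fin_fun K
  haveI : Finite (Submodule K E) :=
    Finite.of_injective (fun W : Submodule K E => (W : Set E)) SetLike.coe_injective
  set SA := {A : Submodule K E // finrank K A = t} with hSA
  set SC := {W : Submodule K E // finrank K W = m + t} with hSC
  set SB := {B : Submodule K E // finrank K B = m} with hSB
  letI : Fintype SA := Fintype.ofFinite _
  letI : Fintype SC := Fintype.ofFinite _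
  letI : Fintype SB := Fintype.ofFinite _
  -- matchings inside each column
  have hmatch : ∀ W : SC,
      ∃ c : {A : Submodule K W.1 // finrank K A = t} → {B : Submodule K W.1 // finrank K B = m},
        Function.Bijective c ∧ ∀ A, IsCompl A.1 (c A).1 := fun W =>
    exists_compl_matching W.2
  choose cfun hcbij hccompl using hmatch
  -- dimension of pulled-back subspaces
  have hpull : ∀ (W : SC) (A : Submodule K E), A ≤ W.1 → ∀ r, finrank K A = r →
      finrank K (A.comap W.1.subtype) = r := by
    intro W A hAW r hA
    have h1 : (A.comap W.1.subtype).map W.1.subtype = A := by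
      rw [Submodule.map_comap_subtype, inf_eq_right.mpr hAW]
    rw [← Submodule.finrank_map_subtype_eq W.1 (A.comap W.1.subtype), h1, hA]
  -- the array
  let P0 : SA → SC → Option SB := fun A W =>
    if h : A.1 ≤ W.1 then
      some ⟨((cfun W ⟨A.1.comap W.1.subtype, hpull W A.1 h t A.2⟩).1).map W.1.subtype, by
        rw [Submodule.finrank_map_subtype_eq]
        exact (cfun W _).2⟩
    else none
  have hP0none : ∀ A W, ¬ A.1 ≤ W.1 → P0 A W = none := fun A W h => dif_neg h
  have hP0some : ∀ (A : SA) (W : SC) (h : A.1 ≤ W.1),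
      P0 A W = some ⟨((cfun W ⟨A.1.comap W.1.subtype, hpull W A.1 h t A.2⟩).1).map W.1.subtype,
        by rw [Submodule.finrank_map_subtype_eq]; exact (cfun W _).2⟩ := fun A W h => dif_pos h
  -- structural facts
  have hsome : ∀ A W U, P0 A W = some U → A.1 ≤ W.1 ∧ A.1 ⊔ U.1 = W.1 := by
    intro A W U hU
    by_cases h : A.1 ≤ W.1
    · refine ⟨h, ?_⟩
      rw [hP0some A W h] at hU
      have hU' := Option.some_inj.mp hU
      set A' : {X : Submodule K W.1 // finrank K X = t} :=
        ⟨A.1.comap W.1.subtype, hpull W A.1 h t A.2⟩ with hA'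
      have hUval : U.1 = ((cfun W A').1).map W.1.subtype := (congrArg Subtype.val hU').symm
      have hsup : A'.1 ⊔ (cfun W A').1 = ⊤ := (hccompl W A').codisjoint.eq_top
      have : A.1 ⊔ U.1 = (A'.1 ⊔ (cfun W A').1).map W.1.subtype := by
        rw [Submodule.map_sup, hUval]
        congr 1
        rw [hA']
        exact (by rw [Submodule.map_comap_subtype, inf_eq_right.mpr h] :
          (A.1.comap W.1.subtype).map W.1.subtype = A.1).symm
      rw [this, hsup, Submodule.map_subtype_top]
    · rw [hP0none A W h] at hU; exact absurd hU (by simp)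
  have hcolinj : ∀ A1 A2 W U, P0 A1 W = some U → P0 A2 W = some U → A1 = A2 := by
    intro A1 A2 W U h1 h2
    have hle1 := (hsome A1 W U h1).1
    have hle2 := (hsome A2 W U h2).1
    rw [hP0some A1 W hle1] at h1
    rw [hP0some A2 W hle2] at h2
    have h3 := (Option.some_inj.mp h1).trans (Option.some_inj.mp h2).symm
    have h4 := congrArg Subtype.val h3
    have h5 := Submodule.map_injective_of_injective (Submodule.injective_subtype W.1) h4
    have h6 := (hcbij W).injective (Subtype.ext h5)
    rw [Subtype.mk_eq_mk] at h6
    apply Subtype.ext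
    have e1 : (A1.1.comap W.1.subtype).map W.1.subtype = A1.1 := by
      rw [Submodule.map_comap_subtype, inf_eq_right.mpr hle1]
    have e2 : (A2.1.comap W.1.subtype).map W.1.subtype = A2.1 := by
      rw [Submodule.map_comap_subtype, inf_eq_right.mpr hle2]
    rw [← e1, ← e2, h6]
  have hsurj : ∀ U : SB, ∃ A W, P0 A W = some U := by
    intro U
    obtain ⟨Wsub, hUW, hWrk⟩ := exists_superspace (r := m + t) U.1 (by rw [U.2]; omega) (by rw [hfr]; omega)
    set W : SC := ⟨Wsub, hWrk⟩ with hW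
    have hUle : U.1 ≤ W.1 := hUW
    obtain ⟨A', hA'⟩ := (hcbij W).surjective ⟨U.1.comap W.1.subtype, hpull W U.1 hUle m U.2⟩
    set A : SA := ⟨A'.1.map W.1.subtype, by
      rw [Submodule.finrank_map_subtype_eq]; exact A'.2⟩ with hA
    have hAW : A.1 ≤ W.1 := Submodule.map_subtype_le W.1 A'.1
    refine ⟨A, W, ?_⟩
    have hA'eq : (⟨A.1.comap W.1.subtype, hpull W A.1 hAW t A.2⟩ :
        {X : Submodule K W.1 // finrank K X = t}) = A' := by
      apply Subtype.ext
      apply Submodule.map_injective_of_injective (Submodule.injective_subtype W.1)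
      rw [Submodule.map_comap_subtype, inf_eq_right.mpr hAW]
    rw [hP0some A W hAW, hA'eq, hA']
    congr 1
    apply Subtype.ext
    show (U.1.comap W.1.subtype).map W.1.subtype = U.1
    rw [Submodule.map_comap_subtype, inf_eq_right.mpr hUle]
  -- cardinalities
  have hFc : Fintype.card SA = gaussBinom (p ^ n) k t := by
    rw [← Nat.card_eq_fintype_card, grass_card (by rw [hfr]; omega), hcardK, hfr]
  have hKc : Fintype.card SC = gaussBinom (p ^ n) k (m + t) := by
    rw [← Nat.card_eq_fintype_card, grass_card (by rw [hfr]; omega), hcardK, hfr]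
  have hSc : Fintype.card SB = gaussBinom (p ^ n) k m := by
    rw [← Nat.card_eq_fintype_card, grass_card (by rw [hfr]; omega), hcardK, hfr]
  -- column star count
  have hc1 : ∀ W : SC, (univ.filter fun A : SA => P0 A W = none).card
      = gaussBinom (p ^ n) k t - gaussBinom (p ^ n) (m + t) t := by
    intro W
    have hnone : ∀ A : SA, (P0 A W = none) ↔ ¬ A.1 ≤ W.1 := by
      intro A
      constructor
      · intro hA h
        rw [hP0some A W h] at hA
        exact absurd hA (by simp)
      · exact hP0none A W
    have hle : (univ.filter fun A : SA => A.1 ≤ W.1).card = gaussBinom (p ^ n) (m + t) t := by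
      rw [← Fintype.card_subtype]
      have e : {A : SA // A.1 ≤ W.1} ≃ {A' : Submodule K W.1 // finrank K A' = t} :=
        { toFun := fun A => ⟨A.1.1.comap W.1.subtype, hpull W A.1.1 A.2 t A.1.2⟩
          invFun := fun A' => ⟨⟨A'.1.map W.1.subtype, by
              rw [Submodule.finrank_map_subtype_eq]; exact A'.2⟩,
            Submodule.map_subtype_le W.1 A'.1⟩
          left_inv := fun A => by
            apply Subtype.ext; apply Subtype.ext
            show (A.1.1.comap W.1.subtype).map W.1.subtype = A.1.1
            rw [Submodule.map_comap_subtype, inf_eq_right.mpr A.2]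
          right_inv := fun A' => by
            apply Subtype.ext
            show (A'.1.map W.1.subtype).comap W.1.subtype = A'.1
            apply Submodule.map_injective_of_injective (Submodule.injective_subtype W.1)
            rw [Submodule.map_comap_subtype,
              inf_eq_right.mpr (Submodule.map_subtype_le W.1 A'.1)] }
      rw [Fintype.card_congr e, ← Nat.card_eq_fintype_card,
        grass_card (by rw [W.2]; omega), hcardK, W.2]
    have hcount : (univ.filter fun A : SA => P0 A W = none)
        = (univ.filter fun A : SA => ¬ A.1 ≤ W.1) :=
      Finset.filter_congr fun A _ => hnone A
    have hsplit : (univ.filter fun A : SA => ¬ A.1 ≤ W.1).card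
        = Fintype.card SA - (univ.filter fun A : SA => A.1 ≤ W.1).card := by
      rw [Finset.filter_not, Finset.card_sdiff_of_subset (Finset.filter_subset _ _), Finset.card_univ]
    rw [hcount, hsplit, hle, hFc]
  -- C3
  have hc3 : ∀ A1 A2 W1 W2 U, (A1, W1) ≠ (A2, W2) → P0 A1 W1 = some U → P0 A2 W2 = some U →
      A1 ≠ A2 ∧ W1 ≠ W2 ∧ P0 A1 W2 = none ∧ P0 A2 W1 = none := by
    intro A1 A2 W1 W2 U hne h1 h2
    obtain ⟨hle1, hsup1⟩ := hsome A1 W1 U h1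
    obtain ⟨hle2, hsup2⟩ := hsome A2 W2 U h2
    have hW : W1 ≠ W2 := by
      rintro rfl
      exact hne (by rw [hcolinj A1 A2 W1 U h1 h2])
    have hA : A1 ≠ A2 := by
      rintro rfl
      exact hW (Subtype.ext (by rw [← hsup1, ← hsup2]))
    have hU2 : U.1 ≤ W2.1 := le_trans le_sup_right (le_of_eq hsup2)
    have hU1 : U.1 ≤ W1.1 := le_trans le_sup_right (le_of_eq hsup1)
    have hn12 : ¬ A1.1 ≤ W2.1 := by
      intro hle
      apply hW
      apply Subtype.ext
      apply Submodule.eq_of_le_of_finrank_eq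
      · rw [← hsup1]; exact sup_le hle hU2
      · rw [W1.2, W2.2]
    have hn21 : ¬ A2.1 ≤ W1.1 := by
      intro hle
      apply hW
      apply Subtype.ext
      apply (Submodule.eq_of_le_of_finrank_eq ?_ ?_).symm
      · rw [← hsup2]; exact sup_le hle hU1
      · rw [W1.2, W2.2]
    exact ⟨hA, hW, hP0none A1 W2 hn12, hP0none A2 W1 hn21⟩
  exact existsPDA_of P0 hFc hKc hSc hc1 hsurj hc3
end

section
/- If there exists a configuration (v_r, b_k) with 1 ≤ r < v and k ≥ 2, then there exists a (K,F,Q,S) placement delivery array with K = v, F = v, Q = v − r, and S = vr/k (= b). -/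
open Finset

/-- A configuration `(v_r, b_k)`: `V` is a `v`-set of points, `B` a `b`-set of blocks,
each block is a `k`-subset, each point lies in exactly `r` blocks, and every
`2`-subset of points is contained in at most one block. -/
def IsConfiguration {V : Type} [Fintype V] [DecidableEq V] (B : Finset (Finset V))
    (v b r k : ℕ) : Prop :=
  Fintype.card V = v ∧ B.card = b ∧
  (∀ blk ∈ B, blk.card = k) ∧
  (∀ x : V, (B.filter fun blk => x ∈ blk).card = r) ∧
  (∀ x y : V, x ≠ y → (B.filter fun blk => x ∈ blk ∧ y ∈ blk).card ≤ 1)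


lemma succ_mod_ne {n i : ℕ} (h2 : 2 ≤ n) (hi : i < n) : (i + 1) % n ≠ i := by
  rcases lt_or_ge (i + 1) n with h | h
  · rw [Nat.mod_eq_of_lt h]; omega
  · have : i + 1 = n := by omega
    rw [this, Nat.mod_self]; omega

lemma succ_mod_inj {n i j : ℕ} (hi : i < n) (hj : j < n)
    (h : (i + 1) % n = (j + 1) % n) : i = j := by
  rcases lt_or_ge (i + 1) n with h1 | h1 <;> rcases lt_or_ge (j + 1) n with h2 | h2
  · rw [Nat.mod_eq_of_lt h1, Nat.mod_eq_of_lt h2] at h; omega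
  · have : j + 1 = n := by omega
    rw [Nat.mod_eq_of_lt h1, this, Nat.mod_self] at h; omega
  · have : i + 1 = n := by omega
    rw [Nat.mod_eq_of_lt h2, this, Nat.mod_self] at h; omega
  · omega

noncomputable def nxt {V : Type} [DecidableEq V] (blk : Finset V) (y : V) : V :=
  if h : y ∈ blk then
    (blk.equivFin.symm ⟨((blk.equivFin ⟨y, h⟩ : Fin blk.card).val + 1) % blk.card,
      Nat.mod_lt _ (Finset.card_pos.mpr ⟨y, h⟩)⟩ : blk)
  else y

section auxnxt
variable {V : Type} [DecidableEq V]

lemma nxt_mem {blk : Finset V} {y : V} (h : y ∈ blk) : nxt blk y ∈ blk := by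
  simp only [nxt, dif_pos h]
  exact (blk.equivFin.symm _).2

lemma nxt_ne {blk : Finset V} {y : V} (h : y ∈ blk) (h2 : 2 ≤ blk.card) :
    nxt blk y ≠ y := by
  simp only [nxt, dif_pos h]
  intro he
  have h3 : blk.equivFin.symm ⟨((blk.equivFin ⟨y, h⟩ : Fin blk.card).val + 1) % blk.card,
      Nat.mod_lt _ (Finset.card_pos.mpr ⟨y, h⟩)⟩ = (⟨y, h⟩ : blk) := Subtype.ext he
  have h4 := congrArg blk.equivFin h3
  rw [Equiv.apply_symm_apply] at h4
  have h5 := congrArg Fin.val h4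
  exact succ_mod_ne h2 (blk.equivFin ⟨y, h⟩).2 h5

lemma nxt_inj {blk : Finset V} {y y' : V} (hy : y ∈ blk) (hy' : y' ∈ blk)
    (h : nxt blk y = nxt blk y') : y = y' := by
  simp only [nxt, dif_pos hy, dif_pos hy'] at h
  have h3 := blk.equivFin.symm.injective (Subtype.ext h)
  have h5 := congrArg Fin.val h3
  have := succ_mod_inj (blk.equivFin ⟨y, hy⟩).2 (blk.equivFin ⟨y', hy'⟩).2 h5
  have := blk.equivFin.injective (Fin.ext this)
  exact congrArg Subtype.val this

end auxnxt

theorem pda_aux {V : Type} [Fintype V] [DecidableEq V]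
    (B : Finset (Finset V)) (v b r k : ℕ) (hr : 1 ≤ r) (hrv : r < v) (hk : 2 ≤ k)
    (hconf : (Fintype.card V = v ∧ B.card = b ∧
  (∀ blk ∈ B, blk.card = k) ∧
  (∀ x : V, (B.filter fun blk => x ∈ blk).card = r) ∧
  (∀ x y : V, x ≠ y → (B.filter fun blk => x ∈ blk ∧ y ∈ blk).card ≤ 1))) :
    ∃ P : Fin v → Fin v → Option (Fin (v * r / k)),
  (∀ k' : Fin v, (univ.filter fun j : Fin v => P j k' = none).card = (v-r)) ∧
  (∀ s : Fin (v*r/k), ∃ j k', P j k' = some s) ∧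
  (∀ (j₁ j₂ : Fin v) (k₁ k₂ : Fin v) (s : Fin (v*r/k)), (j₁, k₁) ≠ (j₂, k₂) →
    P j₁ k₁ = some s → P j₂ k₂ = some s →
    j₁ ≠ j₂ ∧ k₁ ≠ k₂ ∧ P j₁ k₂ = none ∧ P j₂ k₁ = none) := by
  classical
  obtain ⟨hv, hb, hcardk, hreg, hpair⟩ := hconf
  -- each block has card k, so ≥ 2
  have hcard2 : ∀ blk ∈ B, 2 ≤ blk.card := fun blk hblk => by rw [hcardk blk hblk]; exact hk
  -- key uniqueness lemma
  have hkey : ∀ blk ∈ B, ∀ blk' ∈ B, ∀ y y' : V, y ∈ blk → y' ∈ blk' → y' ∈ blk →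
      nxt blk y = nxt blk' y' → blk = blk' ∧ y = y' := by
    intro blk hblk blk' hblk' y y' hy hy' hy'blk hn
    have hzblk : nxt blk y ∈ blk := nxt_mem hy
    have hzblk' : nxt blk y ∈ blk' := by rw [hn]; exact nxt_mem hy'
    have hzy' : nxt blk y ≠ y' := by rw [hn]; exact nxt_ne hy' (hcard2 _ hblk')
    have hle := hpair y' (nxt blk y) (Ne.symm hzy')
    have hmem1 : blk ∈ B.filter fun t => y' ∈ t ∧ nxt blk y ∈ t := by
      simp [Finset.mem_filter, hblk, hy'blk, hzblk]
    have hmem2 : blk' ∈ B.filter fun t => y' ∈ t ∧ nxt blk y ∈ t := by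
      simp [Finset.mem_filter, hblk', hy', hzblk']
    have heq : blk = blk' := Finset.card_le_one.mp hle _ hmem1 _ hmem2
    subst heq
    exact ⟨rfl, nxt_inj hy hy' hn⟩
  -- double counting: b * k = v * r
  have hdc : ∑ blk ∈ B, blk.card = ∑ x : V, (B.filter fun blk => x ∈ blk).card := by
    simp only [Finset.card_filter]
    rw [Finset.sum_comm]
    refine Finset.sum_congr rfl fun blk _ => ?_
    rw [Finset.sum_ite_mem, Finset.univ_inter, Finset.sum_const, smul_eq_mul, mul_one]
  have hbk : b * k = v * r := by
    have h1 : ∑ blk ∈ B, blk.card = b * k := by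
      rw [Finset.sum_congr rfl hcardk, Finset.sum_const, smul_eq_mul, hb]
    have h2 : ∑ x : V, (B.filter fun blk => x ∈ blk).card = v * r := by
      rw [Finset.sum_congr rfl fun x _ => hreg x, Finset.sum_const, smul_eq_mul,
        Finset.card_univ, hv]
    rw [← h1, ← h2, hdc]
  have hS : v * r / k = b := by
    rw [← hbk, Nat.mul_div_cancel _ (by omega : 0 < k)]
  -- the core array, valued in subtype of blocks
  let P0 : V → V → Option {s // s ∈ B} := fun x y =>
    if h : ∃ blk : {s // s ∈ B}, y ∈ blk.1 ∧ nxt blk.1 y = x then some h.choose else none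
  have hP0some : ∀ x y (blk : {s // s ∈ B}), P0 x y = some blk ↔ y ∈ blk.1 ∧ nxt blk.1 y = x := by
    intro x y blk
    constructor
    · intro h
      simp only [P0] at h
      split at h
      · next he =>
        have := he.choose_spec
        rw [Option.some_inj] at h
        rw [← h]; exact this
      · exact absurd h (by simp)
    · intro ⟨h1, h2⟩
      have he : ∃ blk : {s // s ∈ B}, y ∈ blk.1 ∧ nxt blk.1 y = x := ⟨blk, h1, h2⟩
      simp only [P0, dif_pos he]
      congr 1
      have hs := he.choose_spec
      have := hkey he.choose.1 he.choose.2 blk.1 blk.2 y y hs.1 h1 hs.1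
        (by rw [hs.2, h2])
      exact Subtype.ext this.1
  have hP0none : ∀ x y, P0 x y = none ↔ ¬∃ blk : {s // s ∈ B}, y ∈ blk.1 ∧ nxt blk.1 y = x := by
    intro x y
    simp only [P0]
    split
    · next he => simpa using he
    · next he => simpa using he
  -- column counts
  have hcol : ∀ y : V, (univ.filter fun x : V => P0 x y ≠ none).card = r := by
    intro y
    have himg : univ.filter (fun x : V => P0 x y ≠ none)
        = (B.filter fun blk => y ∈ blk).image fun blk => nxt blk y := by
      ext x
      simp only [Finset.mem_filter, Finset.mem_image, Finset.mem_univ, true_and,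
        Option.ne_none_iff_exists']
      constructor
      · rintro ⟨blk, hblk⟩
        rw [hP0some] at hblk
        exact ⟨blk.1, by simp [blk.2, hblk.1], hblk.2⟩
      · rintro ⟨blk, hblk, hx⟩
        exact ⟨⟨blk, hblk.1⟩, (hP0some _ _ _).mpr ⟨hblk.2, hx⟩⟩
    rw [himg, Finset.card_image_of_injOn, ← hreg y]
    intro blk hblk blk' hblk' hn
    rw [Finset.mem_coe, Finset.mem_filter] at hblk hblk'
    exact (hkey blk hblk.1 blk' hblk'.1 y y hblk.2 hblk'.2 hblk.2 hn).1
  have hcolnone : ∀ y : V, (univ.filter fun x : V => P0 x y = none).card = v - r := by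
    intro y
    have := Finset.card_filter_add_card_filter_not
      (s := (univ : Finset V)) (p := fun x => P0 x y = none)
    rw [Finset.card_univ, hv, hcol y] at this
    omega
  -- equivalences
  have hvcard : Fintype.card V = v := hv
  let eV : Fin v ≃ V := (Fintype.equivFinOfCardEq hvcard).symm
  have hBcard : Fintype.card {s // s ∈ B} = v * r / k := by
    rw [Fintype.card_coe, hb, hS]
  let eB : {s // s ∈ B} ≃ Fin (v * r / k) := Fintype.equivFinOfCardEq hBcard
  refine ⟨fun j k' => (P0 (eV j) (eV k')).map eB, ?_, ?_, ?_⟩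
  · -- C1
    intro k'
    have : (univ.filter fun j : Fin v => (P0 (eV j) (eV k')).map eB = none).card
        = (univ.filter fun x : V => P0 x (eV k') = none).card := by
      apply Finset.card_bij (fun j _ => eV j)
      · intro j hj
        simp only [Finset.mem_filter, Finset.mem_univ, true_and, Option.map_eq_none_iff] at hj ⊢
        exact hj
      · intro j1 _ j2 _ h
        exact eV.injective h
      · intro x hx
        refine ⟨eV.symm x, ?_, by simp⟩
        simp only [Finset.mem_filter, Finset.mem_univ, true_and, Option.map_eq_none_iff,
          Equiv.apply_symm_apply] at hx ⊢
        exact hx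
    rw [this, hcolnone]
  · -- C2
    intro s
    have hblk : (eB.symm s).1 ∈ B := (eB.symm s).2
    have hne : (eB.symm s).1.Nonempty := Finset.card_pos.mp (by
      have := hcard2 _ hblk; omega)
    obtain ⟨y, hy⟩ := hne
    refine ⟨eV.symm (nxt (eB.symm s).1 y), eV.symm y, ?_⟩
    have h0 : P0 (nxt (eB.symm s).1 y) y = some (eB.symm s) :=
      (hP0some _ _ _).mpr ⟨hy, rfl⟩
    simp only [Equiv.apply_symm_apply, h0, Option.map_some]
  · -- C3
    intro j₁ j₂ k₁ k₂ s hne h1 h2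
    rw [Option.map_eq_some_iff] at h1 h2
    obtain ⟨blk1, hb1, he1⟩ := h1
    obtain ⟨blk2, hb2, he2⟩ := h2
    have hblkeq : blk1 = blk2 := eB.injective (he1.trans he2.symm)
    subst hblkeq
    rw [hP0some] at hb1 hb2
    obtain ⟨hy1, hx1⟩ := hb1
    obtain ⟨hy2, hx2⟩ := hb2
    have hk12 : k₁ ≠ k₂ := by
      intro h; subst h
      apply hne
      have : eV j₁ = eV j₂ := by rw [← hx1, ← hx2]
      rw [eV.injective this]
    have hy12 : eV k₁ ≠ eV k₂ := fun h => hk12 (eV.injective h)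
    have hj12 : j₁ ≠ j₂ := by
      intro h; subst h
      exact hy12 (nxt_inj hy1 hy2 (hx1.trans hx2.symm))
    refine ⟨hj12, hk12, ?_, ?_⟩
    · rw [Option.map_eq_none_iff]
      cases hc : P0 (eV j₁) (eV k₂) with
      | none => rfl
      | some blk' =>
        rw [hP0some] at hc
        obtain ⟨hyc, hxc⟩ := hc
        have := hkey blk1.1 blk1.2 blk'.1 blk'.2 (eV k₁) (eV k₂) hy1 hyc hy2
          (by rw [hx1, hxc])
        exact absurd this.2 hy12
    · rw [Option.map_eq_none_iff]
      cases hc : P0 (eV j₂) (eV k₁) with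
      | none => rfl
      | some blk' =>
        rw [hP0some] at hc
        obtain ⟨hyc, hxc⟩ := hc
        have := hkey blk1.1 blk1.2 blk'.1 blk'.2 (eV k₂) (eV k₁) hy2 hyc hy1
          (by rw [hx2, hxc])
        exact absurd this.2 hy12.symm

/-- Configuration construction, parameter set 1: a configuration `(v_r, b_k)` with
`1 ≤ r < v` and `k ≥ 2` yields a PDA with `K = v`, `F = v`, `Q = v - r`,
`S = vr/k (= b)`. -/
theorem exists_pda_of_configuration_one {V : Type} [Fintype V] [DecidableEq V]
    (B : Finset (Finset V)) (v b r k : ℕ) (hr : 1 ≤ r) (hrv : r < v) (hk : 2 ≤ k)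
    (hconf : IsConfiguration B v b r k) :
    ExistsPDA v v (v - r) (v * r / k) := by
  obtain ⟨hv, hb, hcardk, hreg, hpair⟩ := hconf
  exact pda_aux B v b r k hr hrv hk ⟨hv, hb, hcardk, hreg, hpair⟩
end

section
/- If there exists a configuration (v_r, b_k) with k ≥ 2 and r < b (where b = vr/k), then there exists a (K,F,Q,S) placement delivery array with K = v, F = vr/k (= b), Q = vr/k − r, and S = v. -/
open Finset

lemma finRotate_ne {n : ℕ} (hn : 2 ≤ n) (i : Fin n) : finRotate n i ≠ i := by
  obtain ⟨m, rfl⟩ : ∃ m, n = m + 2 := ⟨n - 2, by omega⟩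
  rw [finRotate_succ_apply]
  intro h
  rw [Fin.ext_iff, Fin.val_add_one] at h
  split at h
  · next heq => rw [heq] at h; simp at h
  · omega

noncomputable def sigEquiv {V : Type} [DecidableEq V] (blk : Finset V) :
    {x // x ∈ blk} ≃ {x // x ∈ blk} :=
  blk.equivFin.trans ((finRotate blk.card).trans blk.equivFin.symm)

lemma sigEquiv_ne {V : Type} [DecidableEq V] (blk : Finset V) (h2 : 2 ≤ blk.card)
    (x : {x // x ∈ blk}) : sigEquiv blk x ≠ x := by
  intro h
  have := congrArg blk.equivFin h
  simp [sigEquiv] at this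
  exact finRotate_ne h2 _ (by simpa using this)

lemma sig_val_congr {V : Type} [DecidableEq V] {b1 b2 : Finset V} (h : b1 = b2)
    (x : V) (h1 : x ∈ b1) (h2 : x ∈ b2) :
    ((sigEquiv b1 ⟨x, h1⟩ : {y // y ∈ b1}) : V) = ((sigEquiv b2 ⟨x, h2⟩ : {y // y ∈ b2}) : V) := by
  subst h; rfl

lemma card_filter_equiv {α β : Type*} [Fintype α] [Fintype β] (e : α ≃ β)
    (p : β → Prop) [DecidablePred p] :
    (univ.filter fun a => p (e a)).card = (univ.filter p).card := by
  rw [← Fintype.card_subtype, ← Fintype.card_subtype]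
  exact Fintype.card_congr (e.subtypeEquiv fun a => Iff.rfl)

lemma card_filter_attach {α : Type*} [DecidableEq α] (s : Finset α) (p : α → Prop)
    [DecidablePred p] :
    (s.attach.filter fun x => p x.1).card = (s.filter p).card := by
  refine Finset.card_bij (fun x _ => x.1) ?_ ?_ ?_
  · intro x hx
    rw [Finset.mem_filter] at hx
    exact Finset.mem_filter.mpr ⟨x.2, hx.2⟩
  · intro x _ y _ h; exact Subtype.ext h
  · intro y hy; simp at hy; exact ⟨⟨y, hy.1⟩, by simp [hy.2], rfl⟩

/-- Configuration construction, parameter set 2: a configuration `(v_r, b_k)` with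
`k ≥ 2` and `r < b = vr/k` yields a PDA with `K = v`, `F = vr/k (= b)`,
`Q = vr/k - r`, `S = v`. -/
theorem exists_pda_of_configuration_two {V : Type} [Fintype V] [DecidableEq V]
    (B : Finset (Finset V)) (v b r k : ℕ) (hk : 2 ≤ k) (hrb : r < v * r / k)
    (hconf : IsConfiguration B v b r k) :
    ExistsPDA v (v * r / k) (v * r / k - r) v := by
  obtain ⟨hv, hB, hblk, hpt, hpair⟩ := hconf
  have hk0 : 0 < k := by omega
  -- double counting: v * r = b * k
  have hcount : v * r = b * k := by
    have h1 : ∑ x : V, (B.filter fun blk => x ∈ blk).card = ∑ blk ∈ B, blk.card := by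
      simp only [Finset.card_filter]
      rw [Finset.sum_comm]
      refine Finset.sum_congr rfl fun blk _ => ?_
      rw [← Finset.card_filter]
      simp
    calc v * r = ∑ _x : V, r := by rw [Finset.sum_const, Finset.card_univ, hv, smul_eq_mul]
      _ = ∑ x : V, (B.filter fun blk => x ∈ blk).card :=
            Finset.sum_congr rfl fun x _ => (hpt x).symm
      _ = ∑ blk ∈ B, blk.card := h1
      _ = b * k := by rw [Finset.sum_congr rfl hblk, Finset.sum_const, hB, smul_eq_mul]
  have hbeq : v * r / k = b := by rw [hcount, Nat.mul_div_cancel _ hk0]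
  rw [hbeq] at hrb ⊢
  have hr0 : 0 < r := by
    rcases Nat.eq_zero_or_pos r with h | h
    · subst h; simp at hcount; omega
    · exact h
  -- equivalences
  have hBcard : Fintype.card {blk // blk ∈ B} = b := by rw [Fintype.card_coe, hB]
  let eB : Fin b ≃ {blk // blk ∈ B} := (Fintype.equivFinOfCardEq hBcard).symm
  let eV : Fin v ≃ V := (Fintype.equivFinOfCardEq hv).symm
  -- the array
  set P : Fin b → Fin v → Option (Fin v) := fun j i =>
    if h : eV i ∈ (eB j).1 then some (eV.symm (sigEquiv (eB j).1 ⟨eV i, h⟩).1) else none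
    with hP
  have hPnone : ∀ j i, eV i ∉ (eB j).1 → P j i = none := fun j i h => dif_neg h
  have hPsome : ∀ j i s, P j i = some s →
      ∃ h : eV i ∈ (eB j).1, (sigEquiv (eB j).1 ⟨eV i, h⟩).1 = eV s := by
    intro j i s hs
    rw [hP] at hs
    dsimp only at hs
    by_cases h : eV i ∈ (eB j).1
    · rw [dif_pos h] at hs
      refine ⟨h, ?_⟩
      have := Option.some.inj hs
      rw [← this, Equiv.apply_symm_apply]
    · rw [dif_neg h] at hs; exact absurd hs (by simp)
  refine ⟨P, ?_, ?_, ?_⟩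
  · -- C1
    intro i
    have hcong : (univ.filter fun j : Fin b => P j i = none).card
        = (univ.filter fun j : Fin b => eV i ∉ (eB j).1).card := by
      congr 1
      apply Finset.filter_congr
      intro j _
      rw [hP]
      by_cases h : eV i ∈ (eB j).1 <;> simp [h]
    rw [hcong, card_filter_equiv eB (fun blk : {blk // blk ∈ B} => eV i ∉ blk.1)]
    have hattach : (univ.filter fun blk : {blk // blk ∈ B} => eV i ∉ blk.1).card
        = (B.filter fun blk => eV i ∉ blk).card :=
      card_filter_attach B (fun blk => eV i ∉ blk)
    rw [hattach]
    have hsplit := Finset.card_filter_add_card_filter_not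
      (s := B) (p := fun blk => eV i ∈ blk)
    rw [hpt (eV i), hB] at hsplit
    omega
  · -- C2
    intro s
    have hpos : 0 < (B.filter fun blk => eV s ∈ blk).card := by rw [hpt]; exact hr0
    obtain ⟨blk, hblkmem⟩ := Finset.card_pos.mp hpos
    rw [Finset.mem_filter] at hblkmem
    obtain ⟨hblkB, hyblk⟩ := hblkmem
    obtain ⟨x, hx⟩ := (sigEquiv blk).surjective ⟨eV s, hyblk⟩
    refine ⟨eB.symm ⟨blk, hblkB⟩, eV.symm x.1, ?_⟩
    rw [hP]
    dsimp only
    simp only [Equiv.apply_symm_apply]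
    rw [dif_pos x.2,
      sig_val_congr (congrArg Subtype.val (eB.apply_symm_apply ⟨blk, hblkB⟩)) _ _ x.2,
      Subtype.coe_eta, hx]
    simp
  · -- C3
    intro j₁ j₂ k₁ k₂ s hne h1 h2
    obtain ⟨hm1, hs1⟩ := hPsome _ _ _ h1
    obtain ⟨hm2, hs2⟩ := hPsome _ _ _ h2
    have hb1B := (eB j₁).2
    have hb2B := (eB j₂).2
    have hc1 : 2 ≤ ((eB j₁).1).card := by rw [hblk _ hb1B]; exact hk
    have hc2 : 2 ≤ ((eB j₂).1).card := by rw [hblk _ hb2B]; exact hk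
    have hy1 : eV s ∈ (eB j₁).1 := by rw [← hs1]; exact (sigEquiv _ _).2
    have hy2 : eV s ∈ (eB j₂).1 := by rw [← hs2]; exact (sigEquiv _ _).2
    have hne1 : eV s ≠ eV k₁ := fun h =>
      sigEquiv_ne _ hc1 ⟨eV k₁, hm1⟩ (Subtype.ext (hs1.trans h))
    have hne2 : eV s ≠ eV k₂ := fun h =>
      sigEquiv_ne _ hc2 ⟨eV k₂, hm2⟩ (Subtype.ext (hs2.trans h))
    have key : ∀ p y : V, p ≠ y → ∀ b₁ ∈ B, ∀ b₂ ∈ B,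
        p ∈ b₁ → y ∈ b₁ → p ∈ b₂ → y ∈ b₂ → b₁ = b₂ := by
      intro p y hpy b₁ h₁ b₂ h₂ hp1 hy1' hp2 hy2'
      by_contra hne'
      have hsub : ({b₁, b₂} : Finset (Finset V)) ⊆ B.filter fun blk => p ∈ blk ∧ y ∈ blk := by
        intro t ht
        rw [Finset.mem_insert, Finset.mem_singleton] at ht
        rcases ht with rfl | rfl <;> simp [Finset.mem_filter, *]
      have hle := Finset.card_le_card hsub
      rw [Finset.card_pair hne'] at hle
      have := hpair p y hpy
      omega
    have hblkne : (eB j₁).1 ≠ (eB j₂).1 := by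
      intro h
      have hj : j₁ = j₂ := eB.injective (Subtype.ext h)
      subst hj
      have hxx : (⟨eV k₁, hm1⟩ : {x // x ∈ (eB j₁).1}) = ⟨eV k₂, hm2⟩ :=
        (sigEquiv _).injective (Subtype.ext (hs1.trans hs2.symm))
      have hk12 : k₁ = k₂ := eV.injective (congrArg Subtype.val hxx)
      exact hne (by rw [hk12])
    have hjne : j₁ ≠ j₂ := fun h => hblkne (by rw [h])
    have hkne : eV k₁ ≠ eV k₂ := by
      intro h
      exact hblkne (key (eV k₁) (eV s) hne1.symm _ hb1B _ hb2B hm1 hy1 (h ▸ hm2) hy2)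
    have hkne' : k₁ ≠ k₂ := fun h => hkne (by rw [h])
    have hnm12 : eV k₂ ∉ (eB j₁).1 := fun h =>
      hblkne (key (eV k₂) (eV s) hne2.symm _ hb1B _ hb2B h hy1 hm2 hy2)
    have hnm21 : eV k₁ ∉ (eB j₂).1 := fun h =>
      hblkne (key (eV k₁) (eV s) hne1.symm _ hb1B _ hb2B hm1 hy1 h hy2)
    exact ⟨hjne, hkne', hPnone _ _ hnm12, hPnone _ _ hnm21⟩
end

section
/- If there exists a configuration (v_r, b_k) with 2 ≤ k < v and r ≥ 1, then there exists a (K,F,Q,S) placement delivery array with K = vr/k (= b), F = v, Q = v − k, and S = v. -/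
open Finset

/-!
Index rows by points and columns by blocks. In the column of a block `β`, fix a cyclic
permutation `σ` of `β` (it moves every point of `β`, as `k ≥ 2`) and put `σ x` in row `x`
for `x ∈ β`, and `*` elsewhere. Each column then has `v - k` stars, every point is an entry
since it lies on some block, and if `σ x₁ = σ x₂ = s` in two different columns, the two
blocks already share `s`, so neither `x₁` nor `x₂` can lie on the other block: that is
exactly condition C3.
-/

open Equiv

theorem Finset.exists_perm_support_eq {α : Type*} [DecidableEq α] [Fintype α] {s : Finset α}
    (hs : s.Nontrivial) : ∃ f : Perm α, f.support = s := by
  obtain ⟨f, hcycle, hsupport⟩ := s.exists_cycleOn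
  exact ⟨f, hsupport.antisymm fun x hx => Perm.mem_support.2 (hcycle.apply_ne (by simpa) hx)⟩

section PermArray

variable {K F : ℕ}

def permArray (σ : Fin K → Perm (Fin F)) : Fin F → Fin K → Option (Fin F) :=
  fun j c => if j ∈ (σ c).support then some (σ c j) else none

theorem permArray_eq_none_iff (σ : Fin K → Perm (Fin F)) (j : Fin F) (c : Fin K) :
    permArray σ j c = none ↔ j ∉ (σ c).support := by
  unfold permArray; split_ifs with h <;> simp [h]

theorem permArray_eq_some_iff (σ : Fin K → Perm (Fin F)) (j : Fin F) (c : Fin K) (s : Fin F) :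
    permArray σ j c = some s ↔ j ∈ (σ c).support ∧ σ c j = s := by
  unfold permArray; split_ifs with h <;> simp [h]

theorem isPDA_permArray {Q : ℕ} (σ : Fin K → Perm (Fin F))
    (hstars : ∀ c, #(σ c).supportᶜ = Q) (hcover : ∀ s, ∃ c, s ∈ (σ c).support)
    (hinter : Pairwise fun c₁ c₂ => #((σ c₁).support ∩ (σ c₂).support) ≤ 1) :
    IsPDA Q (permArray σ) := by
  refine ⟨fun c => ?_, fun s => ?_, ?_⟩
  · rw [← hstars c]
    congr 1
    ext j
    simp [permArray_eq_none_iff]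
  · obtain ⟨c, hs⟩ := hcover s
    refine ⟨(σ c)⁻¹ s, c, (permArray_eq_some_iff ..).2 ⟨?_, by simp⟩⟩
    exact Perm.apply_mem_support.1 (by simpa using hs)
  intro j₁ j₂ c₁ c₂ s hne h₁ h₂
  obtain ⟨hj₁, rfl⟩ := (permArray_eq_some_iff ..).1 h₁
  obtain ⟨hj₂, hs⟩ := (permArray_eq_some_iff ..).1 h₂
  have hc : c₁ ≠ c₂ := by
    rintro rfl
    exact hne (by rw [(σ c₁).injective hs])
  have hs₁ : σ c₁ j₁ ∈ (σ c₁).support := Perm.apply_mem_support.2 hj₁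
  have hs₂ : σ c₁ j₁ ∈ (σ c₂).support := hs ▸ Perm.apply_mem_support.2 hj₂
  have hshared : ∀ x ∈ (σ c₁).support, x ∈ (σ c₂).support → x = σ c₁ j₁ := fun x hx₁ hx₂ =>
    card_le_one.1 (hinter hc) x (mem_inter.2 ⟨hx₁, hx₂⟩) _ (mem_inter.2 ⟨hs₁, hs₂⟩)
  have hj₁c₂ : j₁ ∉ (σ c₂).support := fun h =>
    Perm.mem_support.1 hj₁ (hshared j₁ hj₁ h).symm
  have hj₂c₁ : j₂ ∉ (σ c₁).support := fun h =>
    Perm.mem_support.1 hj₂ (hs.trans (hshared j₂ h hj₂).symm)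
  exact ⟨fun h => hj₁c₂ (h ▸ hj₂), hc, (permArray_eq_none_iff ..).2 hj₁c₂,
    (permArray_eq_none_iff ..).2 hj₂c₁⟩

end PermArray

namespace IsConfiguration

variable {V : Type} [Fintype V] [DecidableEq V] {B : Finset (Finset V)} {v b r k : ℕ}

theorem card_mul (h : IsConfiguration B v b r k) : b * k = v * r := by
  obtain ⟨hv, hb, hblk, hpoint, -⟩ := h
  rw [← hb, ← hv, ← sum_card hpoint, sum_const_nat hblk]

theorem exists_block_mem (h : IsConfiguration B v b r k) (hr : 1 ≤ r) (x : V) : ∃ β ∈ B, x ∈ β := by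
  obtain ⟨β, hβ⟩ : {β ∈ B | x ∈ β}.Nonempty := by
    rw [← card_pos, h.2.2.2.1 x]
    exact hr
  exact ⟨β, (mem_filter.1 hβ).1, (mem_filter.1 hβ).2⟩

theorem card_inter_le_one (h : IsConfiguration B v b r k) {β₁ β₂ : Finset V} (h₁ : β₁ ∈ B)
    (h₂ : β₂ ∈ B) (hne : β₁ ≠ β₂) : #(β₁ ∩ β₂) ≤ 1 := by
  refine card_le_one.2 fun x hx y hy => by_contra fun hxy => ?_
  rw [mem_inter] at hx hy
  have : 1 < #{β ∈ B | x ∈ β ∧ y ∈ β} := one_lt_card.2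
    ⟨β₁, by simp [h₁, hx.1, hy.1], β₂, by simp [h₂, hx.2, hy.2], hne⟩
  exact (h.2.2.2.2 x y hxy).not_gt this

end IsConfiguration

theorem exists_pda_of_configuration_three_general {V : Type} [Fintype V] [DecidableEq V]
    (B : Finset (Finset V)) (v b r k : ℕ) (hk : 2 ≤ k) (hr : 1 ≤ r)
    (hconf : IsConfiguration B v b r k) :
    ExistsPDA (v * r / k) v (v - k) v := by
  have hK : B.card = v * r / k := by
    rw [hconf.2.1, ← hconf.card_mul, Nat.mul_div_cancel _ (by omega)]
  let e : Fin v ≃ V := (Fintype.equivFinOfCardEq hconf.1).symm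
  let col : Fin (v * r / k) ≃ B := (finCongr hK.symm).trans B.equivFin.symm
  let block (c : Fin (v * r / k)) : Finset (Fin v) := (col c : Finset V).map e.symm.toEmbedding
  have hblock : ∀ c, #(block c) = k := fun c => by simp [block, hconf.2.2.1 _ (col c).2]
  choose σ hσ using fun c =>
    exists_perm_support_eq (one_lt_card_iff_nontrivial.1 ((hblock c).symm ▸ hk))
  refine ⟨permArray σ, isPDA_permArray σ (fun c => ?_) (fun s => ?_) fun c₁ c₂ hc => ?_⟩
  · rw [hσ, card_compl, hblock, Fintype.card_fin]
  · obtain ⟨β, hβ, hs⟩ := hconf.exists_block_mem hr (e s)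
    exact ⟨col.symm ⟨β, hβ⟩, by simpa [hσ, block] using hs⟩
  · dsimp only
    rw [hσ, hσ, ← map_inter, card_map]
    exact hconf.card_inter_le_one (col c₁).2 (col c₂).2
      fun h => hc (col.injective (Subtype.ext h))

/-- Configuration construction, parameter set 3: a configuration `(v_r, b_k)` with
`2 ≤ k < v` and `r ≥ 1` yields a PDA with `K = vr/k (= b)`, `F = v`, `Q = v - k`,
`S = v`. -/
theorem exists_pda_of_configuration_three {V : Type} [Fintype V] [DecidableEq V]
    (B : Finset (Finset V)) (v b r k : ℕ) (hk : 2 ≤ k) (hkv : k < v) (hr : 1 ≤ r)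
    (hconf : IsConfiguration B v b r k) :
    ExistsPDA (v * r / k) v (v - k) v :=
  exists_pda_of_configuration_three_general B v b r k hk hr hconf
end

section
/- Suppose there exists a t-(v,k,1)-design with t ≤ k/2 + 1, and let t0 be a positive integer with t/2 ≤ t0 ≤ t − 1. Then there exists a (K,F,Q,S) placement delivery array with K = C(v,t0), F = C(v,t0), Q = C(v,t0) − λ_{t0}, and S = b, where λ_{t0} = C(v−t0, t−t0)/C(k−t0, t−t0) and b = C(v,t)/C(k,t). -/
open Finset

/-- A `t`-`(v,k,1)` design (Steiner system `S(t,k,v)`): `V` is a `v`-set, each block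
is a `k`-subset of `V`, and every `t`-subset of `V` lies in exactly one block. -/
def IsSteinerSystem {V : Type} [Fintype V] [DecidableEq V] (B : Finset (Finset V))
    (t v k : ℕ) : Prop :=
  Fintype.card V = v ∧ (∀ blk ∈ B, blk.card = k) ∧
  (∀ T : Finset V, T.card = t → (B.filter fun blk => T ⊆ blk).card = 1)


section PDAConstruction
set_option linter.unusedSectionVars false
set_option linter.unusedVariables false

lemma existsPDA_transport {A1 A2 St : Type} [Fintype A1] [Fintype A2] [Fintype St]
    [DecidableEq A1] [DecidableEq A2] [DecidableEq St] {K F Q S : ℕ}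
    (hK : Fintype.card A1 = K) (hF : Fintype.card A2 = F) (hS : Fintype.card St = S)
    (P' : A2 → A1 → Option St)
    (hC1 : ∀ c, (univ.filter fun j => P' j c = none).card = Q)
    (hC2 : ∀ s, ∃ j c, P' j c = some s)
    (hC3 : ∀ j₁ j₂ c₁ c₂ s, (j₁, c₁) ≠ (j₂, c₂) → P' j₁ c₁ = some s → P' j₂ c₂ = some s →
      j₁ ≠ j₂ ∧ c₁ ≠ c₂ ∧ P' j₁ c₂ = none ∧ P' j₂ c₁ = none) :
    ExistsPDA K F Q S := by
  subst hK hF hS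
  let eJ : Fin (Fintype.card A2) ≃ A2 := (Fintype.equivFin A2).symm
  let eC : Fin (Fintype.card A1) ≃ A1 := (Fintype.equivFin A1).symm
  let eS : St ≃ Fin (Fintype.card St) := Fintype.equivFin St
  refine ⟨fun j c => (P' (eJ j) (eC c)).map eS, ?_, ?_, ?_⟩
  · intro c
    rw [← hC1 (eC c)]
    apply Finset.card_bij (fun j _ => eJ j)
    · intro j hj
      simp only [Finset.mem_filter, Finset.mem_univ, true_and] at hj ⊢
      exact Option.map_eq_none_iff.mp hj
    · intro j _ j' _ he
      exact eJ.injective he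
    · intro j' hj'
      simp only [Finset.mem_filter, Finset.mem_univ, true_and] at hj'
      refine ⟨eJ.symm j', ?_, eJ.apply_symm_apply j'⟩
      simp only [Finset.mem_filter, Finset.mem_univ, true_and, eJ.apply_symm_apply]
      rw [hj']
      rfl
  · intro s
    obtain ⟨j, c, h⟩ := hC2 (eS.symm s)
    refine ⟨eJ.symm j, eC.symm c, ?_⟩
    show Option.map (⇑eS) (P' (eJ (eJ.symm j)) (eC (eC.symm c))) = some s
    rw [eJ.apply_symm_apply, eC.apply_symm_apply, h]
    simp
  · intro j1 j2 c1 c2 s hne h1 h2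
    obtain ⟨a1, ha1, hae1⟩ := Option.map_eq_some_iff.mp h1
    obtain ⟨a2, ha2, hae2⟩ := Option.map_eq_some_iff.mp h2
    have haa : a2 = a1 := eS.injective (by rw [hae1, hae2])
    rw [haa] at ha2
    have hpairne : (eJ j1, eC c1) ≠ (eJ j2, eC c2) := by
      intro h
      apply hne
      rw [Prod.mk.injEq] at h ⊢
      exact ⟨eJ.injective h.1, eC.injective h.2⟩
    obtain ⟨hj, hc, hn1, hn2⟩ := hC3 _ _ _ _ _ hpairne ha1 ha2
    refine ⟨fun h => hj (by rw [h]), fun h => hc (by rw [h]), ?_, ?_⟩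
    · show Option.map (⇑eS) (P' (eJ j1) (eC c2)) = none
      rw [hn1]; rfl
    · show Option.map (⇑eS) (P' (eJ j2) (eC c1)) = none
      rw [hn2]; rfl

variable {V : Type} [Fintype V] [DecidableEq V]

/-- Number of `n`-subsets of `s` containing a fixed subset `U`. -/
lemma card_filter_supersets (U s : Finset V) (hUs : U ⊆ s) {n : ℕ} (hUn : U.card ≤ n) :
    ((s.powersetCard n).filter (fun T => U ⊆ T)).card
      = (s.card - U.card).choose (n - U.card) := by
  have hrhs : ((s \ U).powersetCard (n - U.card)).card
      = (s.card - U.card).choose (n - U.card) := by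
    rw [Finset.card_powersetCard, Finset.card_sdiff_of_subset hUs]
  rw [← hrhs]
  apply Finset.card_bij' (fun T _ => T \ U) (fun W _ => U ∪ W)
  · intro T hT
    simp only [Finset.mem_filter, Finset.mem_powersetCard] at hT
    obtain ⟨⟨hTs, hTc⟩, hUT⟩ := hT
    rw [Finset.mem_powersetCard]
    refine ⟨Finset.sdiff_subset_sdiff hTs (Finset.Subset.refl U), ?_⟩
    rw [Finset.card_sdiff_of_subset hUT, hTc]
  · intro W hW
    rw [Finset.mem_powersetCard] at hW
    obtain ⟨hWs, hWc⟩ := hW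
    rw [Finset.subset_sdiff] at hWs
    have hdisj : Disjoint U W := hWs.2.symm
    simp only [Finset.mem_filter, Finset.mem_powersetCard]
    refine ⟨⟨Finset.union_subset hUs hWs.1, ?_⟩, Finset.subset_union_left⟩
    rw [Finset.card_union_of_disjoint hdisj, hWc]
    omega
  · intro T hT
    simp only [Finset.mem_filter, Finset.mem_powersetCard] at hT
    exact Finset.union_sdiff_of_subset hT.2
  · intro W hW
    rw [Finset.mem_powersetCard, Finset.subset_sdiff] at hW
    exact Finset.union_sdiff_cancel_left hW.1.2.symm

lemma design_count (B : Finset (Finset V)) (t v k : ℕ) (hdes : IsSteinerSystem B t v k)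
    (htk : t ≤ k) (U : Finset V) (s0 : ℕ) (hU : U.card = s0) (hst : s0 ≤ t) :
    (B.filter fun blk => U ⊆ blk).card * (k - s0).choose (t - s0)
      = (v - s0).choose (t - s0) := by
  obtain ⟨hv, hk, huniq⟩ := hdes
  have hD : (((univ : Finset V).powersetCard t).filter (fun T => U ⊆ T)).card
      = (v - s0).choose (t - s0) := by
    rw [card_filter_supersets U univ (Finset.subset_univ U) (by omega), Finset.card_univ, hv, hU]
  have key := Finset.card_mul_eq_card_mul (r := fun (T blk : Finset V) => T ⊆ blk)
    (s := ((univ : Finset V).powersetCard t).filter (fun T => U ⊆ T))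
    (t := B.filter (fun blk => U ⊆ blk)) (m := 1) (n := (k - s0).choose (t - s0)) ?_ ?_
  · rw [mul_one, hD] at key
    exact key.symm
  · intro T hT
    simp only [Finset.mem_filter, Finset.mem_powersetCard] at hT
    have heq : (B.filter (fun blk => U ⊆ blk)).bipartiteAbove (fun T blk => T ⊆ blk) T
        = B.filter (fun blk => T ⊆ blk) := by
      ext blk
      simp only [Finset.bipartiteAbove, Finset.mem_filter]
      constructor
      · rintro ⟨⟨h1, _⟩, h3⟩; exact ⟨h1, h3⟩
      · rintro ⟨h1, h3⟩; exact ⟨⟨h1, hT.2.trans h3⟩, h3⟩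
    rw [heq, huniq T hT.1.2]
  · intro blk hblk
    simp only [Finset.mem_filter] at hblk
    have heq : (((univ : Finset V).powersetCard t).filter (fun T => U ⊆ T)).bipartiteBelow
          (fun T blk => T ⊆ blk) blk
        = (blk.powersetCard t).filter (fun T => U ⊆ T) := by
      ext T
      simp only [Finset.bipartiteBelow, Finset.mem_filter, Finset.mem_powersetCard]
      constructor
      · rintro ⟨⟨⟨_, h2⟩, h3⟩, h4⟩; exact ⟨⟨h4, h2⟩, h3⟩
      · rintro ⟨⟨h4, h2⟩, h3⟩; exact ⟨⟨⟨Finset.subset_univ T, h2⟩, h3⟩, h4⟩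
    rw [heq, card_filter_supersets U blk hblk.2 (by omega), hk blk hblk.1, hU]

lemma exists_disjoint_perm (s : Finset V) (r : ℕ) (h2r : 2 * r ≤ s.card) :
    ∃ σ : Equiv.Perm {T : Finset V // T ⊆ s ∧ T.card = r},
      ∀ T, Disjoint T.1 (σ T).1 := by
  classical
  let nbhd : {T : Finset V // T ⊆ s ∧ T.card = r} → Finset {T : Finset V // T ⊆ s ∧ T.card = r} :=
    fun a => univ.filter (fun b => Disjoint a.1 b.1)
  set d := (s.card - r).choose r with hd
  have hcount : ∀ W : Finset V, W ⊆ s → W.card = r →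
      (univ.filter (fun b : {T : Finset V // T ⊆ s ∧ T.card = r} => Disjoint W b.1)).card = d := by
    intro W hWs hWc
    have h1 : (univ.filter (fun b : {T : Finset V // T ⊆ s ∧ T.card = r} => Disjoint W b.1)).card
        = ((s \ W).powersetCard r).card := by
      apply Finset.card_bij (fun b _ => b.1)
      · intro b hb
        simp only [Finset.mem_filter, Finset.mem_univ, true_and] at hb
        rw [Finset.mem_powersetCard]
        exact ⟨Finset.subset_sdiff.mpr ⟨b.2.1, hb.symm⟩, b.2.2⟩
      · intro b _ b' _ he
        exact Subtype.ext he
      · intro W' hW'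
        rw [Finset.mem_powersetCard, Finset.subset_sdiff] at hW'
        refine ⟨⟨W', hW'.1.1, hW'.2⟩, ?_, rfl⟩
        simp only [Finset.mem_filter, Finset.mem_univ, true_and]
        exact hW'.1.2.symm
    rw [h1, Finset.card_powersetCard, Finset.card_sdiff_of_subset hWs, hWc, hd]
  have hnbhd_card : ∀ a, (nbhd a).card = d := fun a => hcount a.1 a.2.1 a.2.2
  have hall : ∀ A : Finset {T : Finset V // T ⊆ s ∧ T.card = r},
      A.card ≤ (A.biUnion nbhd).card := by
    intro A
    have hd0 : 0 < d := Nat.choose_pos (by omega)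
    have key : A.card * d ≤ (A.biUnion nbhd).card * d := by
      apply Finset.card_mul_le_card_mul (fun a b => Disjoint a.1 b.1)
      · intro a ha
        have hsub : nbhd a ⊆ (A.biUnion nbhd).bipartiteAbove (fun a b => Disjoint a.1 b.1) a := by
          intro b hb
          rw [Finset.mem_bipartiteAbove]
          have hbd : Disjoint a.1 b.1 := by
            have := Finset.mem_filter.mp hb
            exact this.2
          exact ⟨Finset.mem_biUnion.mpr ⟨a, ha, hb⟩, hbd⟩
        calc d = (nbhd a).card := (hnbhd_card a).symm
        _ ≤ _ := Finset.card_le_card hsub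
      · intro b _
        have hsub : A.bipartiteBelow (fun a b => Disjoint a.1 b.1) b
            ⊆ univ.filter (fun a : {T : Finset V // T ⊆ s ∧ T.card = r} => Disjoint b.1 a.1) := by
          intro a ha
          rw [Finset.mem_bipartiteBelow] at ha
          simp only [Finset.mem_filter, Finset.mem_univ, true_and]
          exact ha.2.symm
        calc _ ≤ _ := Finset.card_le_card hsub
        _ = d := hcount b.1 b.2.1 b.2.2
    exact Nat.le_of_mul_le_mul_right key hd0
  obtain ⟨f, finj, hf⟩ := (Finset.all_card_le_biUnion_card_iff_exists_injective nbhd).mp hall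
  refine ⟨Equiv.ofBijective f (Finite.injective_iff_bijective.mp finj), fun T => ?_⟩
  have := Finset.mem_filter.mp (hf T)
  exact this.2

/-- The matching partner of `T1` inside block `blk`. -/
noncomputable def pdaM (t0 : ℕ)
    (σ : ∀ blk : Finset V, Equiv.Perm {T : Finset V // T ⊆ blk ∧ T.card = t0})
    (blk T1 : Finset V) : Finset V :=
  if h : T1 ⊆ blk ∧ T1.card = t0 then (σ blk ⟨T1, h⟩).1 else ∅

/-- The set of blocks that could be the symbol at position `(T1, T2)`. -/
noncomputable def pdaC (B : Finset (Finset V)) (t0 : ℕ)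
    (σ : ∀ blk : Finset V, Equiv.Perm {T : Finset V // T ⊆ blk ∧ T.card = t0})
    (T1 T2 : Finset V) : Finset (Finset V) :=
  B.filter (fun blk => T1 ⊆ blk ∧ pdaM t0 σ blk T1 = T2)

open scoped Classical in
/-- The PDA array, indexed by `t0`-subsets, with symbols the blocks. -/
noncomputable def pdaP (B : Finset (Finset V)) (t0 : ℕ)
    (σ : ∀ blk : Finset V, Equiv.Perm {T : Finset V // T ⊆ blk ∧ T.card = t0})
    (T1 T2 : {T : Finset V // T.card = t0}) : Option {x // x ∈ B} :=
  if h : (pdaC B t0 σ T1.1 T2.1).Nonempty then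
    some ⟨h.choose, (Finset.mem_filter.mp h.choose_spec).1⟩
  else none

lemma steiner_pda_aux (B : Finset (Finset V)) (t v k t0 : ℕ) (ht : 0 < t) (htk : t ≤ k)
    (hdes : IsSteinerSystem B t v k) (ht0l : t ≤ 2 * t0) (ht0t : t0 < t) (h2t0k : 2 * t0 ≤ k) :
    ∃ P' : {T : Finset V // T.card = t0} → {T : Finset V // T.card = t0} → Option {x // x ∈ B},
      (∀ T2, (univ.filter fun T1 => P' T1 T2 = none).card
          = v.choose t0 - (v - t0).choose (t - t0) / (k - t0).choose (t - t0)) ∧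
      (∀ b, ∃ T1 T2, P' T1 T2 = some b) ∧
      (∀ T1 T1' T2 T2' b, (T1, T2) ≠ (T1', T2') → P' T1 T2 = some b → P' T1' T2' = some b →
        T1 ≠ T1' ∧ T2 ≠ T2' ∧ P' T1 T2' = none ∧ P' T1' T2 = none) := by
  obtain ⟨hv, hk, huniq⟩ := hdes
  -- the disjointness permutations on each block
  have hex : ∀ blk : Finset V, ∃ σ : Equiv.Perm {T : Finset V // T ⊆ blk ∧ T.card = t0},
      blk ∈ B → ∀ T, Disjoint T.1 (σ T).1 := by
    intro blk
    by_cases hb : blk ∈ B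
    · obtain ⟨σ, hσ⟩ := exists_disjoint_perm blk t0 (by rw [hk blk hb]; exact h2t0k)
      exact ⟨σ, fun _ => hσ⟩
    · exact ⟨Equiv.refl _, fun h => absurd h hb⟩
  choose σ hσ using hex
  -- uniqueness of a block through ≥ t points
  have blk_unique : ∀ {b1 b2 W : Finset V}, b1 ∈ B → b2 ∈ B → t ≤ W.card →
      W ⊆ b1 → W ⊆ b2 → b1 = b2 := by
    intro b1 b2 W hb1 hb2 hW hs1 hs2
    obtain ⟨U, hUW, hUc⟩ := Finset.exists_subset_card_eq hW
    exact Finset.card_le_one.mp (le_of_eq (huniq U hUc)) _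
      (Finset.mem_filter.mpr ⟨hb1, hUW.trans hs1⟩) _
      (Finset.mem_filter.mpr ⟨hb2, hUW.trans hs2⟩)
  -- basic properties of pdaM
  have hM_spec : ∀ blk ∈ B, ∀ T1 : Finset V, ∀ h : T1 ⊆ blk ∧ T1.card = t0,
      pdaM t0 σ blk T1 ⊆ blk ∧ (pdaM t0 σ blk T1).card = t0 ∧
        Disjoint T1 (pdaM t0 σ blk T1) := by
    intro blk hb T1 h
    simp only [pdaM, dif_pos h]
    exact ⟨(σ blk ⟨T1, h⟩).2.1, (σ blk ⟨T1, h⟩).2.2, hσ blk hb ⟨T1, h⟩⟩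
  have hM_inj : ∀ (blk T1 T1' : Finset V) (h : T1 ⊆ blk ∧ T1.card = t0)
      (h' : T1' ⊆ blk ∧ T1'.card = t0),
      pdaM t0 σ blk T1 = pdaM t0 σ blk T1' → T1 = T1' := by
    intro blk T1 T1' h h' he
    simp only [pdaM, dif_pos h, dif_pos h'] at he
    have := (σ blk).injective (Subtype.ext he)
    exact congrArg Subtype.val this
  have hM_surj : ∀ (blk T2 : Finset V), T2 ⊆ blk → T2.card = t0 →
      ∃ T1, (T1 ⊆ blk ∧ T1.card = t0) ∧ pdaM t0 σ blk T1 = T2 := by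
    intro blk T2 hs hc
    refine ⟨((σ blk).symm ⟨T2, hs, hc⟩).1, ((σ blk).symm ⟨T2, hs, hc⟩).2, ?_⟩
    simp only [pdaM, dif_pos ((σ blk).symm ⟨T2, hs, hc⟩).2]
    have : (⟨((σ blk).symm ⟨T2, hs, hc⟩).1, ((σ blk).symm ⟨T2, hs, hc⟩).2⟩ :
        {T : Finset V // T ⊆ blk ∧ T.card = t0}) = (σ blk).symm ⟨T2, hs, hc⟩ := rfl
    rw [this, Equiv.apply_symm_apply]
  have hCmem : ∀ T1 T2 blk : Finset V, blk ∈ pdaC B t0 σ T1 T2 ↔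
      blk ∈ B ∧ T1 ⊆ blk ∧ pdaM t0 σ blk T1 = T2 := by
    intro T1 T2 blk
    simp [pdaC, Finset.mem_filter, and_assoc]
  have hC_unique : ∀ T1 T2 : Finset V, T1.card = t0 →
      ∀ b1 ∈ pdaC B t0 σ T1 T2, ∀ b2 ∈ pdaC B t0 σ T1 T2, b1 = b2 := by
    intro T1 T2 h1c b1 hb1 b2 hb2
    rw [hCmem] at hb1 hb2
    obtain ⟨hb1B, hsub1, hm1⟩ := hb1
    obtain ⟨hb2B, hsub2, hm2⟩ := hb2
    have hspec1 := hM_spec b1 hb1B T1 ⟨hsub1, h1c⟩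
    rw [hm1] at hspec1
    have hspec2 := hM_spec b2 hb2B T1 ⟨hsub2, h1c⟩
    rw [hm2] at hspec2
    have hcard : t ≤ (T1 ∪ T2).card := by
      rw [Finset.card_union_of_disjoint hspec1.2.2, h1c, hspec1.2.1]; omega
    exact blk_unique hb1B hb2B hcard (Finset.union_subset hsub1 hspec1.1)
      (Finset.union_subset hsub2 hspec2.1)
  have hPnone : ∀ T1 T2, pdaP B t0 σ T1 T2 = none ↔ ¬(pdaC B t0 σ T1.1 T2.1).Nonempty := by
    intro T1 T2
    simp only [pdaP]
    split
    · rename_i h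
      exact iff_of_false (by simp) (not_not_intro h)
    · rename_i h
      exact iff_of_true rfl h
  have hPsome : ∀ T1 T2 (b : {x // x ∈ B}), pdaP B t0 σ T1 T2 = some b ↔
      b.1 ∈ pdaC B t0 σ T1.1 T2.1 := by
    intro T1 T2 b
    constructor
    · intro h
      simp only [pdaP] at h
      split at h
      · rename_i hne
        have hb := Option.some_inj.mp h
        rw [← hb]
        exact hne.choose_spec
      · exact absurd h (by simp)
    · intro h
      have hne : (pdaC B t0 σ T1.1 T2.1).Nonempty := ⟨b.1, h⟩
      simp only [pdaP, dif_pos hne]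
      exact congrArg some (Subtype.ext (hC_unique _ _ T1.2 _ hne.choose_spec _ h))
  refine ⟨pdaP B t0 σ, ?_, ?_, ?_⟩
  · -- C1
    intro T2
    have hA : Fintype.card {T : Finset V // T.card = t0} = v.choose t0 := by
      rw [Fintype.card_finset_len, hv]
    have hne : ∀ T1 : {T : Finset V // T.card = t0},
        T1 ∈ univ.filter (fun T1 => ¬ pdaP B t0 σ T1 T2 = none) →
        (pdaC B t0 σ T1.1 T2.1).Nonempty := by
      intro T1 hT1
      by_contra hc
      exact (Finset.mem_filter.mp hT1).2 ((hPnone T1 T2).mpr hc)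
    have hR : (univ.filter fun T1 => ¬ pdaP B t0 σ T1 T2 = none).card
        = (B.filter fun blk => T2.1 ⊆ blk).card := by
      apply Finset.card_bij (fun T1 hT1 => (hne T1 hT1).choose)
      · intro T1 hT1
        have hm := (hne T1 hT1).choose_spec
        rw [hCmem] at hm
        obtain ⟨hbB, hsub, hmm⟩ := hm
        have hss := (hM_spec _ hbB T1.1 ⟨hsub, T1.2⟩).1
        rw [hmm] at hss
        exact Finset.mem_filter.mpr ⟨hbB, hss⟩
      · intro T1 h1 T1' h1' he
        have hm1 := (hne T1 h1).choose_spec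
        have hm2 := (hne T1' h1').choose_spec
        rw [he] at hm1
        rw [hCmem] at hm1 hm2
        apply Subtype.ext
        exact hM_inj _ _ _ ⟨hm1.2.1, T1.2⟩ ⟨hm2.2.1, T1'.2⟩ (hm1.2.2.trans hm2.2.2.symm)
      · intro blk hblk
        rw [Finset.mem_filter] at hblk
        obtain ⟨T1v, h1, hMe⟩ := hM_surj blk T2.1 hblk.2 T2.2
        have hmemC : blk ∈ pdaC B t0 σ T1v T2.1 := (hCmem _ _ _).mpr ⟨hblk.1, h1.1, hMe⟩
        have hmemR : (⟨T1v, h1.2⟩ : {T : Finset V // T.card = t0}) ∈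
            univ.filter (fun T1 => ¬ pdaP B t0 σ T1 T2 = none) := by
          refine Finset.mem_filter.mpr ⟨Finset.mem_univ _, ?_⟩
          rw [hPnone]
          exact not_not_intro ⟨blk, hmemC⟩
        exact ⟨⟨T1v, h1.2⟩, hmemR, hC_unique _ _ h1.2 _ (hne _ hmemR).choose_spec _ hmemC⟩
    have hlam := design_count B t v k ⟨hv, hk, huniq⟩ htk T2.1 t0 T2.2 (le_of_lt ht0t)
    have hc0 : 0 < (k - t0).choose (t - t0) := Nat.choose_pos (by omega)
    have hlamval : (B.filter fun blk => T2.1 ⊆ blk).card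
        = (v - t0).choose (t - t0) / (k - t0).choose (t - t0) := by
      rw [← hlam, Nat.mul_div_cancel _ hc0]
    have hsplit := Finset.card_filter_add_card_filter_not
      (s := (univ : Finset {T : Finset V // T.card = t0}))
      (p := fun T1 => pdaP B t0 σ T1 T2 = none)
    rw [Finset.card_univ, hA, hR, hlamval] at hsplit
    omega
  · -- C2
    intro b
    have hbB := b.2
    obtain ⟨T1v, hT1sub, hT1c⟩ := Finset.exists_subset_card_eq
      (show t0 ≤ b.1.card by rw [hk b.1 hbB]; omega)
    have hspec := hM_spec b.1 hbB T1v ⟨hT1sub, hT1c⟩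
    refine ⟨⟨T1v, hT1c⟩, ⟨pdaM t0 σ b.1 T1v, hspec.2.1⟩, ?_⟩
    rw [hPsome]
    exact (hCmem _ _ _).mpr ⟨hbB, hT1sub, rfl⟩
  · -- C3
    intro T1 T1' T2 T2' b hne12 h1 h2
    rw [hPsome] at h1 h2
    rw [hCmem] at h1 h2
    obtain ⟨hbB, hsub1, hm1⟩ := h1
    obtain ⟨_, hsub1', hm1'⟩ := h2
    have hspec1 := hM_spec b.1 hbB T1.1 ⟨hsub1, T1.2⟩
    rw [hm1] at hspec1
    have hspec1' := hM_spec b.1 hbB T1'.1 ⟨hsub1', T1'.2⟩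
    rw [hm1'] at hspec1'
    have hT1ne : T1 ≠ T1' := by
      intro h
      apply hne12
      have h2 : T2 = T2' := Subtype.ext (by rw [← hm1, ← hm1', h])
      rw [h, h2]
    have hT2ne : T2 ≠ T2' := by
      intro h
      apply hT1ne
      apply Subtype.ext
      apply hM_inj b.1 _ _ ⟨hsub1, T1.2⟩ ⟨hsub1', T1'.2⟩
      rw [hm1, hm1', h]
    refine ⟨hT1ne, hT2ne, ?_, ?_⟩
    · rw [hPnone]
      rintro ⟨blk', hblk'⟩
      rw [hCmem] at hblk'
      obtain ⟨hb'B, hsub'', hm''⟩ := hblk'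
      have hspec'' := hM_spec blk' hb'B T1.1 ⟨hsub'', T1.2⟩
      rw [hm''] at hspec''
      have hcard : t ≤ (T1.1 ∪ T2'.1).card := by
        rw [Finset.card_union_of_disjoint hspec''.2.2, T1.2, T2'.2]; omega
      have heqb : blk' = b.1 := blk_unique hb'B hbB hcard
        (Finset.union_subset hsub'' hspec''.1) (Finset.union_subset hsub1 hspec1'.1)
      apply hT2ne
      apply Subtype.ext
      rw [← hm1, ← hm'', heqb]
    · rw [hPnone]
      rintro ⟨blk', hblk'⟩
      rw [hCmem] at hblk'
      obtain ⟨hb'B, hsub'', hm''⟩ := hblk'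
      have hspec'' := hM_spec blk' hb'B T1'.1 ⟨hsub'', T1'.2⟩
      rw [hm''] at hspec''
      have hcard : t ≤ (T1'.1 ∪ T2.1).card := by
        rw [Finset.card_union_of_disjoint hspec''.2.2, T1'.2, T2.2]; omega
      have heqb : blk' = b.1 := blk_unique hb'B hbB hcard
        (Finset.union_subset hsub'' hspec''.1) (Finset.union_subset hsub1' hspec1.1)
      apply hT1ne
      apply Subtype.ext
      apply hM_inj b.1 _ _ ⟨hsub1, T1.2⟩ ⟨hsub1', T1'.2⟩
      rw [hm1, ← hm'', heqb]

end PDAConstruction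

/-- Steiner-system construction (`t ≤ k/2 + 1`), parameter set 1: a `t`-`(v,k,1)`
design with `t ≤ k/2 + 1` and `t/2 ≤ t0 ≤ t - 1` yields a PDA with
`K = F = C(v,t0)`, `Q = C(v,t0) - λ_{t0}`, `S = b = C(v,t)/C(k,t)`,
where `λ_{t0} = C(v-t0,t-t0)/C(k-t0,t-t0)`. -/
theorem exists_pda_of_steiner_small_t_one {V : Type} [Fintype V] [DecidableEq V]
    (B : Finset (Finset V)) (t v k t0 : ℕ) (ht : 0 < t) (htk : t ≤ k) (hkv : k < v)
    (hdes : IsSteinerSystem B t v k)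
    (ht2 : 2 * t ≤ k + 2) (ht0 : 0 < t0) (ht0l : t ≤ 2 * t0) (ht0u : t0 ≤ t - 1) :
    ExistsPDA (Nat.choose v t0) (Nat.choose v t0)
      (Nat.choose v t0 - Nat.choose (v - t0) (t - t0) / Nat.choose (k - t0) (t - t0))
      (Nat.choose v t / Nat.choose k t) := by
  have hv := hdes.1
  have ht0t : t0 < t := by omega
  have h2t0k : 2 * t0 ≤ k := by omega
  obtain ⟨P', h1, h2, h3⟩ := steiner_pda_aux B t v k t0 ht htk hdes ht0l ht0t h2t0k
  have hK : Fintype.card {T : Finset V // T.card = t0} = v.choose t0 := by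
    rw [Fintype.card_finset_len, hv]
  have hBc : B.card * k.choose t = v.choose t := by
    have := design_count B t v k hdes htk ∅ 0 (by simp) (by omega)
    simpa using this
  have hS : Fintype.card {x // x ∈ B} = v.choose t / k.choose t := by
    rw [Fintype.card_coe, ← hBc, Nat.mul_div_cancel _ (Nat.choose_pos htk)]
  exact existsPDA_transport hK hK hS P' h1 h2 h3
end

section
/- Suppose there exists a t-(v,k,1)-design with t ≤ k/2 + 1, and let t0 be a positive integer with t/2 ≤ t0 ≤ t − 1. Then there exists a (K,F,Q,S) placement delivery array with K = C(v,t0), F = b, Q = b − λ_{t0}, and S = C(v,t0), where λ_{t0} = C(v−t0, t−t0)/C(k−t0, t−t0) and b = C(v,t)/C(k,t). -/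
open Finset

/-!
Rows are indexed by the blocks, columns and symbols by the `t₀`-subsets of `V`. Inside a block
`b`, the relation `#(T ∪ T') = t` on the `t₀`-subsets of `b` is regular of degree
`C(t₀, 2t₀ - t) * C(k - t₀, t - t₀)`, which is positive because `t ≤ 2t₀` and `t ≤ k`; by Hall's
theorem it contains a permutation `σ_b`. The entry at `(b, T)` is `σ_b T` if `T ⊆ b` and `*`
otherwise, so column `T` has a `*` in each of the `#B - λ_{t₀}` blocks not containing `T`. If
`σ_{b₁} T₁ = σ_{b₂} T₂ = S` with `b₁ ≠ b₂`, then `T₁ ⊆ b₂` would put the `t`-set `T₁ ∪ S` into two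
blocks; hence the entries at `(b₂, T₁)` and, symmetrically, `(b₁, T₂)` are `*`.
-/

namespace Finset

variable {α : Type*} [DecidableEq α]

theorem card_filter_powersetCard_card_inter {s u : Finset α} (hsu : s ⊆ u) {m i : ℕ}
    (hi : i ≤ m) :
    #{w ∈ powersetCard m u | #(w ∩ s) = i} = (#s).choose i * (#u - #s).choose (m - i) := by
  rw [← card_sdiff_of_subset hsu, ← card_powersetCard, ← card_powersetCard, ← card_product]
  refine card_nbij' (fun w => (w ∩ s, w \ s)) (fun p => p.1 ∪ p.2) ?_ ?_ ?_ ?_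
  · intro w hw
    simp only [coe_filter, mem_powersetCard, Set.mem_ofPred_eq, coe_product, Set.mem_prod,
      mem_coe] at hw ⊢
    have := card_inter_add_card_sdiff w s
    exact ⟨⟨inter_subset_right, hw.2⟩, sdiff_subset_sdiff hw.1.1 Subset.rfl, by omega⟩
  · intro p hp
    simp only [coe_product, Set.mem_prod, mem_coe, mem_powersetCard, subset_sdiff] at hp
    obtain ⟨⟨has, rfl⟩, ⟨hbu, hbs⟩, hb⟩ := hp
    simp only [coe_filter, mem_powersetCard, Set.mem_ofPred_eq]
    refine ⟨⟨union_subset (has.trans hsu) hbu, ?_⟩, ?_⟩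
    · rw [card_union_of_disjoint (hbs.symm.mono_left has)]; omega
    · rw [union_inter_distrib_right, inter_eq_left.mpr has, disjoint_iff_inter_eq_empty.mp hbs,
        union_empty]
  · intro w _
    exact sup_inf_sdiff w s
  · intro p hp
    simp only [coe_product, Set.mem_prod, mem_coe, mem_powersetCard, subset_sdiff] at hp
    obtain ⟨⟨has, -⟩, ⟨-, hbs⟩, -⟩ := hp
    simp only [union_inter_distrib_right, inter_eq_left.mpr has,
      disjoint_iff_inter_eq_empty.mp hbs, union_empty, union_sdiff_distrib,
      sdiff_eq_empty_iff_subset.mpr has, sdiff_eq_self_of_disjoint hbs, empty_union]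

theorem card_filter_powersetCard_superset {s u : Finset α} (hsu : s ⊆ u) {n : ℕ}
    (hn : #s ≤ n) : #{w ∈ powersetCard n u | s ⊆ w} = (#u - #s).choose (n - #s) := by
  have hsw : ∀ w, s ⊆ w ↔ #(w ∩ s) = #s := fun w =>
    ⟨fun h => by rw [inter_eq_right.mpr h],
      fun h => inter_eq_right.mp (eq_of_subset_of_card_le inter_subset_right h.ge)⟩
  simp_rw [hsw, card_filter_powersetCard_card_inter hsu hn, Nat.choose_self, one_mul]

theorem card_filter_powersetCard_card_union {s u : Finset α} (hsu : s ⊆ u) {m n : ℕ}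
    (hs : #s = m) (hmn : m ≤ n) (hn : n ≤ 2 * m) :
    #{w ∈ powersetCard m u | #(s ∪ w) = n} = m.choose (2 * m - n) * (#u - m).choose (n - m) := by
  have hunion : ∀ w ∈ powersetCard m u, #(s ∪ w) = n ↔ #(w ∩ s) = 2 * m - n := fun w hw => by
    have := card_union_add_card_inter s w
    have := (mem_powersetCard.mp hw).2
    rw [inter_comm]
    omega
  rw [filter_congr hunion, card_filter_powersetCard_card_inter hsu (by omega), hs,
    show m - (2 * m - n) = n - m by omega]

theorem exists_bijOn_forall_rel_of_regular {s : Finset α} {r : α → α → Prop}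
    [DecidableRel r] {d : ℕ} (hd : 0 < d) (habove : ∀ a ∈ s, #(s.bipartiteAbove r a) = d)
    (hbelow : ∀ b ∈ s, #(s.bipartiteBelow r b) = d) :
    ∃ f : α → α, Set.BijOn f s s ∧ ∀ a ∈ s, r a (f a) := by
  -- Hall's condition, by double counting the edges between `A` and its neighbourhood
  have hall : ∀ A : Finset s, #A ≤ #(A.biUnion fun a => s.bipartiteAbove r a) := by
    intro A
    refine Nat.le_of_mul_le_mul_right ?_ hd
    rw [← card_map (Function.Embedding.subtype _)]
    refine card_mul_le_card_mul r (fun a ha => ?_) (fun b hb => ?_)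
    · obtain ⟨a, haA, rfl⟩ := mem_map.mp ha
      refine (habove a a.2).ge.trans (card_le_card fun b hb => ?_)
      simp only [bipartiteAbove, mem_filter] at hb ⊢
      exact ⟨mem_biUnion.mpr ⟨a, haA, mem_filter.mpr hb⟩, hb.2⟩
    · obtain ⟨a, -, hab⟩ := mem_biUnion.mp hb
      refine le_of_le_of_eq (card_le_card fun a ha => ?_) (hbelow b (mem_filter.mp hab).1)
      simp only [bipartiteBelow, mem_filter, mem_map, Function.Embedding.subtype_apply] at ha ⊢
      obtain ⟨⟨a, -, rfl⟩, hr⟩ := ha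
      exact ⟨a.2, hr⟩
  obtain ⟨f, hf_inj, hf⟩ := (all_card_le_biUnion_card_iff_exists_injective _).mp hall
  have hf' : ∀ a (ha : a ∈ s), f ⟨a, ha⟩ ∈ s ∧ r a (f ⟨a, ha⟩) := fun a ha => mem_filter.mp (hf _)
  set g := fun a => if h : a ∈ s then f ⟨a, h⟩ else a
  have hg : ∀ a (ha : a ∈ s), g a = f ⟨a, ha⟩ := fun a ha => dif_pos ha
  have hmaps : Set.MapsTo g s s := fun a ha => by rw [hg a ha]; exact (hf' a ha).1
  have hinj : Set.InjOn g s := fun a ha b hb hab => by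
    rw [hg a ha, hg b hb] at hab
    exact congrArg Subtype.val (hf_inj hab)
  refine ⟨g, ⟨hmaps, hinj, surjOn_of_injOn_of_card_le g hmaps hinj le_rfl⟩, fun a ha => ?_⟩
  rw [hg a ha]
  exact (hf' a ha).2

end Finset

namespace IsSteinerSystem

variable {V : Type} [Fintype V] [DecidableEq V] {B : Finset (Finset V)} {t v k : ℕ}

theorem card_filter_superset_mul (hB : IsSteinerSystem B t v k) {s : Finset V} (hs : #s ≤ t) :
    #{b ∈ B | s ⊆ b} * (k - #s).choose (t - #s) = (v - #s).choose (t - #s) := by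
  obtain ⟨hv, hk, hunique⟩ := hB
  have h := card_mul_eq_card_mul (s := {b ∈ B | s ⊆ b})
    (t := {w ∈ powersetCard t univ | s ⊆ w}) (fun b w => w ⊆ b) (m := (k - #s).choose (t - #s))
    (n := 1) (fun b hb => ?_) (fun w hw => ?_)
  · rwa [mul_one, card_filter_powersetCard_superset (subset_univ s) hs, card_univ, hv] at h
  · obtain ⟨hbB, hsb⟩ := mem_filter.mp hb
    rw [← hk b hbB, ← card_filter_powersetCard_superset hsb hs]
    congr 1
    ext w
    simp only [bipartiteAbove, mem_filter, mem_powersetCard, subset_univ, true_and]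
    tauto
  · obtain ⟨hw, hsw⟩ := mem_filter.mp hw
    rw [← hunique w (mem_powersetCard.mp hw).2]
    congr 1
    ext b
    simp only [bipartiteBelow, mem_filter, and_assoc]
    exact ⟨fun h => ⟨h.1, h.2.2⟩, fun h => ⟨h.1, hsw.trans h.2, h.2⟩⟩

theorem card_eq (hB : IsSteinerSystem B t v k) (htk : t ≤ k) : #B = v.choose t / k.choose t := by
  have h := hB.card_filter_superset_mul (s := ∅) (Nat.zero_le t)
  simp only [empty_subset, filter_true_of_mem fun _ _ => trivial, card_empty, Nat.sub_zero] at h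
  rw [← h, Nat.mul_div_cancel _ (Nat.choose_pos htk)]

theorem card_filter_superset (hB : IsSteinerSystem B t v k) (htk : t ≤ k) {s : Finset V}
    (hs : #s ≤ t) :
    #{b ∈ B | s ⊆ b} = (v - #s).choose (t - #s) / (k - #s).choose (t - #s) := by
  rw [← hB.card_filter_superset_mul hs, Nat.mul_div_cancel _ (Nat.choose_pos (by omega))]

theorem exists_mem_superset (hB : IsSteinerSystem B t v k) (htv : t ≤ v) {s : Finset V}
    (hs : #s ≤ t) : ∃ b ∈ B, s ⊆ b := by
  have h := hB.card_filter_superset_mul hs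
  have hpos : 0 < #{b ∈ B | s ⊆ b} :=
    Nat.pos_of_mul_pos_right (h ▸ Nat.choose_pos (by omega))
  obtain ⟨b, hb⟩ := card_pos.mp hpos
  exact ⟨b, (mem_filter.mp hb).1, (mem_filter.mp hb).2⟩

theorem eq_of_subset_of_subset (hB : IsSteinerSystem B t v k) {w b₁ b₂ : Finset V} (hw : #w = t)
    (hb₁ : b₁ ∈ B) (hb₂ : b₂ ∈ B) (h₁ : w ⊆ b₁) (h₂ : w ⊆ b₂) : b₁ = b₂ :=
  card_le_one.mp (hB.2.2 w hw).le b₁ (mem_filter.mpr ⟨hb₁, h₁⟩) b₂ (mem_filter.mpr ⟨hb₂, h₂⟩)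

end IsSteinerSystem

def IsIndexedPDA {R C Sym : Type*} [Fintype R] (Q : ℕ) (P : R → C → Option Sym) : Prop :=
  (∀ c, #{r | P r c = none} = Q) ∧ (∀ s, ∃ r c, P r c = some s) ∧
  (∀ r₁ r₂ c₁ c₂ s, (r₁, c₁) ≠ (r₂, c₂) → P r₁ c₁ = some s → P r₂ c₂ = some s →
    r₁ ≠ r₂ ∧ c₁ ≠ c₂ ∧ P r₁ c₂ = none ∧ P r₂ c₁ = none)

theorem IsIndexedPDA.reindex {R R' C C' Sym Sym' : Type*} [Fintype R] [Fintype R'] {Q : ℕ}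
    {P : R → C → Option Sym} (hP : IsIndexedPDA Q P) (eR : R' ≃ R) (eC : C' ≃ C) (eS : Sym ≃ Sym') :
    IsIndexedPDA Q fun r c => (P (eR r) (eC c)).map eS := by
  obtain ⟨hstar, hsym, hpair⟩ := hP
  have hsome : ∀ x : Option Sym, ∀ s, x.map eS = some s ↔ x = some (eS.symm s) := by
    intro x s; cases x <;> simp [Equiv.eq_symm_apply]
  refine ⟨fun c => ?_, fun s => ?_, fun r₁ r₂ c₁ c₂ s hne h₁ h₂ => ?_⟩
  · rw [← hstar (eC c)]
    exact card_equiv eR (by simp)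
  · obtain ⟨r, c, hrc⟩ := hsym (eS.symm s)
    exact ⟨eR.symm r, eC.symm c, by simp [hrc]⟩
  · rw [hsome] at h₁ h₂
    have hne' : (eR r₁, eC c₁) ≠ (eR r₂, eC c₂) := by simpa using hne
    obtain ⟨hr, hc, h₁₂, h₂₁⟩ := hpair _ _ _ _ _ hne' h₁ h₂
    exact ⟨fun h => hr (congrArg eR h), fun h => hc (congrArg eC h), by simp [h₁₂], by simp [h₂₁]⟩

theorem IsIndexedPDA.existsPDA {R C Sym : Type*} [Fintype R] [Fintype C] [Fintype Sym] {Q : ℕ}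
    {P : R → C → Option Sym} (hP : IsIndexedPDA Q P) :
    ExistsPDA (Fintype.card C) (Fintype.card R) Q (Fintype.card Sym) :=
  ⟨_, hP.reindex (Fintype.equivFin R).symm (Fintype.equivFin C).symm (Fintype.equivFin Sym)⟩

section SteinerConstruction

variable {V : Type} [DecidableEq V]

theorem exists_bijOn_card_union_eq [Fintype V] (b : Finset V) {m n : ℕ} (hmn : m ≤ n)
    (hn : n ≤ 2 * m) (hnb : n ≤ #b) :
    ∃ σ : {T : Finset V // #T = m} → {T : Finset V // #T = m},
      Set.BijOn σ {T | T.1 ⊆ b} {T | T.1 ⊆ b} ∧ ∀ T, T.1 ⊆ b → #(T.1 ∪ (σ T).1) = n := by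
  set s : Finset {T : Finset V // #T = m} := {T | T.1 ⊆ b}
  set r : {T : Finset V // #T = m} → {T : Finset V // #T = m} → Prop :=
    fun T U => #(T.1 ∪ U.1) = n
  set d := m.choose (2 * m - n) * (#b - m).choose (n - m) with hd
  have habove : ∀ T ∈ s, #(s.bipartiteAbove r T) = d := by
    intro T hT
    rw [hd, ← card_filter_powersetCard_card_union (mem_filter.mp hT).2 T.2 hmn hn,
      ← card_map (Function.Embedding.subtype _)]
    congr 1
    ext w
    simp only [bipartiteAbove, mem_map, mem_filter, mem_univ, true_and,
      Function.Embedding.subtype_apply, Subtype.exists, exists_and_left, exists_prop,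
      exists_eq_right_right, mem_powersetCard, r, s]
    tauto
  have hbelow : ∀ U ∈ s, #(s.bipartiteBelow r U) = d := by
    intro U hU
    rw [← habove U hU]
    simp only [bipartiteBelow, bipartiteAbove, r, union_comm]
  obtain ⟨σ, hbij, hσ⟩ := exists_bijOn_forall_rel_of_regular
    (Nat.mul_pos (Nat.choose_pos (by omega)) (Nat.choose_pos (by omega))) habove hbelow
  exact ⟨σ, by simpa [s] using hbij, fun T hT => hσ T (by simpa [s] using hT)⟩

variable {B : Finset (Finset V)} {t v k t₀ : ℕ}

def steinerArray (σ : B → {T : Finset V // #T = t₀} → {T : Finset V // #T = t₀}) (b : B)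
    (T : {T : Finset V // #T = t₀}) : Option {T : Finset V // #T = t₀} :=
  if T.1 ⊆ b then some (σ b T) else none

variable {σ : B → {T : Finset V // #T = t₀} → {T : Finset V // #T = t₀}}

theorem steinerArray_eq_none_iff {b : B} {T : {T : Finset V // #T = t₀}} :
    steinerArray σ b T = none ↔ ¬T.1 ⊆ b := by
  unfold steinerArray; split_ifs <;> simp [*]

theorem steinerArray_eq_some_iff {b : B} {T U : {T : Finset V // #T = t₀}} :
    steinerArray σ b T = some U ↔ T.1 ⊆ b ∧ σ b T = U := by
  unfold steinerArray; split_ifs <;> simp [*]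

variable [Fintype V]

theorem eq_of_steinerArray_eq_some (hB : IsSteinerSystem B t v k)
    (hbij : ∀ b : B, Set.BijOn (σ b) {T | T.1 ⊆ b} {T | T.1 ⊆ b})
    (hσ : ∀ (b : B) (T : {T : Finset V // #T = t₀}), T.1 ⊆ b → #(T.1 ∪ (σ b T).1) = t)
    {b₁ b₂ : B} {T₁ T₂ U : {T : Finset V // #T = t₀}} (h₁ : steinerArray σ b₁ T₁ = some U)
    (h₂ : steinerArray σ b₂ T₂ = some U) (h₁₂ : T₁.1 ⊆ b₂) : b₁ = b₂ := by
  rw [steinerArray_eq_some_iff] at h₁ h₂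
  have hUb₂ : U.1 ⊆ b₂ := h₂.2 ▸ (hbij b₂).mapsTo h₂.1
  have hUb₁ : U.1 ⊆ b₁ := h₁.2 ▸ (hbij b₁).mapsTo h₁.1
  have hcard : #(T₁.1 ∪ U.1) = t := h₁.2 ▸ hσ b₁ T₁ h₁.1
  exact Subtype.ext (hB.eq_of_subset_of_subset hcard b₁.2 b₂.2 (union_subset h₁.1 hUb₁)
    (union_subset h₁₂ hUb₂))

theorem isIndexedPDA_steinerArray (hB : IsSteinerSystem B t v k) (htk : t ≤ k) (htv : t ≤ v)
    (ht₀ : t₀ ≤ t) (hbij : ∀ b : B, Set.BijOn (σ b) {T | T.1 ⊆ b} {T | T.1 ⊆ b})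
    (hσ : ∀ (b : B) (T : {T : Finset V // #T = t₀}), T.1 ⊆ b → #(T.1 ∪ (σ b T).1) = t) :
    IsIndexedPDA (#B - (v - t₀).choose (t - t₀) / (k - t₀).choose (t - t₀)) (steinerArray σ) := by
  refine ⟨fun T => ?_, fun U => ?_, fun b₁ b₂ T₁ T₂ U hne h₁ h₂ => ?_⟩
  · have hsplit := card_filter_add_card_filter_not (s := (univ : Finset B)) (fun b => T.1 ⊆ b)
    rw [univ_eq_attach, filter_attach (fun b => T.1 ⊆ b), card_map, card_attach,
      hB.card_filter_superset htk (T.2.trans_le ht₀), T.2, card_attach] at hsplit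
    simp_rw [steinerArray_eq_none_iff, univ_eq_attach]
    omega
  · obtain ⟨b, hb, hUb⟩ := hB.exists_mem_superset htv (U.2.trans_le ht₀)
    obtain ⟨T, hTb, hTU⟩ := (hbij ⟨b, hb⟩).surjOn hUb
    exact ⟨⟨b, hb⟩, T, steinerArray_eq_some_iff.mpr ⟨hTb, hTU⟩⟩
  · have hb : b₁ ≠ b₂ := by
      rintro rfl
      obtain ⟨hT₁, hU₁⟩ := steinerArray_eq_some_iff.mp h₁
      obtain ⟨hT₂, hU₂⟩ := steinerArray_eq_some_iff.mp h₂
      exact hne (by rw [(hbij b₁).injOn hT₁ hT₂ (hU₁.trans hU₂.symm)])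
    have hT₁ : ¬T₁.1 ⊆ b₂ := fun h => hb (eq_of_steinerArray_eq_some hB hbij hσ h₁ h₂ h)
    have hT₂ : ¬T₂.1 ⊆ b₁ := fun h => hb (eq_of_steinerArray_eq_some hB hbij hσ h₂ h₁ h).symm
    refine ⟨hb, ?_, steinerArray_eq_none_iff.mpr hT₂, steinerArray_eq_none_iff.mpr hT₁⟩
    rintro rfl
    exact hT₁ (steinerArray_eq_some_iff.mp h₂).1

end SteinerConstruction

theorem exists_pda_of_steiner_small_t_two_general {V : Type} [Fintype V] [DecidableEq V]
    (B : Finset (Finset V)) (t v k t0 : ℕ) (htk : t ≤ k) (hkv : k < v)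
    (hdes : IsSteinerSystem B t v k)
    (ht0l : t ≤ 2 * t0) (ht0u : t0 ≤ t - 1) :
    ExistsPDA (Nat.choose v t0) (Nat.choose v t / Nat.choose k t)
      (Nat.choose v t / Nat.choose k t -
        Nat.choose (v - t0) (t - t0) / Nat.choose (k - t0) (t - t0))
      (Nat.choose v t0) := by
  have ht0t : t0 ≤ t := by omega
  choose σ hbij hσ using fun b : B =>
    exists_bijOn_card_union_eq b.1 ht0t ht0l (htk.trans_eq (hdes.2.1 b b.2).symm)
  have hPDA := (isIndexedPDA_steinerArray hdes htk (by omega) ht0t hbij hσ).existsPDA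
  rwa [Fintype.card_coe, Fintype.card_finset_len, hdes.1, hdes.card_eq htk] at hPDA

/-- Steiner-system construction (`t ≤ k/2 + 1`), parameter set 2: a `t`-`(v,k,1)`
design with `t ≤ k/2 + 1` and `t/2 ≤ t0 ≤ t - 1` yields a PDA with
`K = C(v,t0)`, `F = b`, `Q = b - λ_{t0}`, `S = C(v,t0)`, where
`λ_{t0} = C(v-t0,t-t0)/C(k-t0,t-t0)` and `b = C(v,t)/C(k,t)`. -/
theorem exists_pda_of_steiner_small_t_two {V : Type} [Fintype V] [DecidableEq V]
    (B : Finset (Finset V)) (t v k t0 : ℕ) (ht : 0 < t) (htk : t ≤ k) (hkv : k < v)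
    (hdes : IsSteinerSystem B t v k)
    (ht2 : 2 * t ≤ k + 2) (ht0 : 0 < t0) (ht0l : t ≤ 2 * t0) (ht0u : t0 ≤ t - 1) :
    ExistsPDA (Nat.choose v t0) (Nat.choose v t / Nat.choose k t)
      (Nat.choose v t / Nat.choose k t -
        Nat.choose (v - t0) (t - t0) / Nat.choose (k - t0) (t - t0))
      (Nat.choose v t0) :=
  exists_pda_of_steiner_small_t_two_general B t v k t0 htk hkv hdes ht0l ht0u
end
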